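/- arXiv:1505.01146 — 7 statements merged into one kernel-verified Lean document; each statement's English description precedes it below -/
import Mathlib

section
/- Let B be a ring and S a multiplicatively closed subset such that the associated category 𝒮 is filtered (i.e. (a) for all s,t ∈ S there exist x,y ∈ B with sx = ty ∈ S; (b) for all s ∈ S and x,y ∈ B with sx = sy ∈ S there exists z ∈ B with xz = yz and sxz ∈ S). Then for s ∈ S, left multiplication l_s : B|S → B|S on the module of right fractions is surjective if and only if for every b ∈ B the sets sB and bS intersect nontrivially (sB ∩ bS ≠ ∅). -/
/-! STATEMENT 1: if the category 𝒮 associated to a multiplicatively closed set S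
is filtered, then for s ∈ S, left multiplication by s on the module of right
fractions B|S is surjective iff sB ∩ bS ≠ ∅ for every b ∈ B. -/

/-- The submodule of relations defining the module of right fractions. -/
noncomputable def fracRel (B : Type) [Ring B] (S : Set B) : Submodule B (↥S →₀ B) :=
  Submodule.span B { v | ∃ (s x : B) (hs : s ∈ S) (hsx : s * x ∈ S),
    v = Finsupp.single ⟨s * x, hsx⟩ x - Finsupp.single ⟨s, hs⟩ 1 }

/-- The left `B`-module `B|S` of right fractions with denominators in `S`. -/
abbrev Frac (B : Type) [Ring B] (S : Set B) : Type :=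
  (↥S →₀ B) ⧸ fracRel B S

/-- The fraction `b|s`. -/
noncomputable def fracElt (B : Type) [Ring B] (S : Set B) (b s : B) (hs : s ∈ S) :
    Frac B S :=
  Submodule.Quotient.mk (Finsupp.single ⟨s, hs⟩ b)

/-- A left `B`-module is `S`-local if every `s ∈ S` acts invertibly by left
multiplication. -/
def SLocal (B : Type) [Ring B] (S : Set B) (N : Type) [AddCommGroup N] [Module B N] :
    Prop :=
  ∀ s ∈ S, Function.Bijective (fun n : N => s • n)

/-!
Surjectivity of `l_s` means that each `b|1 = (b u)|u` is of the form `s • (c|u) = (s c)|u`.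
Filteredness makes two fractions with a common denominator `u` equal only when their
numerators are equalized by some `x` with `u x ∈ S`, which yields `s (c x) = b (u x)`.
Conversely, `s c = b u` gives `s • (c|t u) = (b u)|(t u) = b|t`.

The equalization criterion holds because the formal sums which, brought to a common
denominator, have numerator zero form a submodule; filteredness is exactly what makes
it closed under addition, and it contains the defining relations `x|s x - 1|s`.
-/

theorem Finsupp.linearCombination_congr {α R M : Type*} [Semiring R] [AddCommMonoid M]
    [Module R M] {v w : α → M} {f : α →₀ R} (h : ∀ p ∈ f.support, v p = w p) :
    Finsupp.linearCombination R v f = Finsupp.linearCombination R w f := by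
  simp only [Finsupp.linearCombination_apply]
  exact Finsupp.sum_congr fun p hp => by rw [h p hp]

section

variable {B : Type} [Ring B] {S : Set B}

/-- Filteredness of the category `𝒮`, together with `1 ∈ S`. -/
structure IsFilteredDenominators (S : Set B) : Prop where
  one_mem : (1 : B) ∈ S
  exists_mul_eq_mul : ∀ s ∈ S, ∀ t ∈ S, ∃ x y : B, s * x = t * y ∧ s * x ∈ S
  exists_mul_eq_mul_of_mul_eq : ∀ s ∈ S, ∀ x y : B, s * x = s * y → s * x ∈ S →
    ∃ z : B, x * z = y * z ∧ s * x * z ∈ S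

theorem fracElt_eq_mul_right (b : B) {s x t : B} (hs : s ∈ S) (ht : t ∈ S) (h : s * x = t) :
    fracElt B S b s hs = fracElt B S (b * x) t ht := by
  subst h
  have hrel : Finsupp.single (⟨s * x, ht⟩ : S) x - Finsupp.single ⟨s, hs⟩ 1 ∈ fracRel B S :=
    Submodule.subset_span ⟨s, x, hs, ht, rfl⟩
  rw [fracElt, fracElt, Submodule.Quotient.eq, ← neg_mem_iff]
  convert (fracRel B S).smul_mem b hrel using 1
  simp only [smul_sub, Finsupp.smul_single, smul_eq_mul, mul_one, neg_sub]

theorem fracElt_add (a b t : B) (ht : t ∈ S) :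
    fracElt B S a t ht + fracElt B S b t ht = fracElt B S (a + b) t ht := by
  rw [fracElt, fracElt, fracElt, ← Submodule.Quotient.mk_add, ← Finsupp.single_add]

theorem smul_fracElt (r b t : B) (ht : t ∈ S) :
    r • fracElt B S b t ht = fracElt B S (r * b) t ht := by
  rw [fracElt, fracElt, ← Submodule.Quotient.mk_smul, Finsupp.smul_single, smul_eq_mul]

theorem IsFilteredDenominators.exists_eq_fracElt (hS : IsFilteredDenominators S)
    (m : Frac B S) : ∃ b t, ∃ ht : t ∈ S, m = fracElt B S b t ht := by
  obtain ⟨f, rfl⟩ := Submodule.Quotient.mk_surjective _ m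
  induction f using Finsupp.induction with
  | zero => exact ⟨0, 1, hS.one_mem, by simp [fracElt]⟩
  | single_add p b f _ _ ih =>
    obtain ⟨c, u, hu, hf⟩ := ih
    obtain ⟨x, y, hxy, hx⟩ := hS.exists_mul_eq_mul p.1 p.2 u hu
    refine ⟨b * x + c * y, p.1 * x, hx, ?_⟩
    rw [Submodule.Quotient.mk_add, hf, ← fracElt_add, ← fracElt_eq_mul_right b p.2 hx rfl,
      ← fracElt_eq_mul_right c hu hx hxy.symm]
    rfl

theorem Finsupp.linearCombination_mul_right {α : Type*} (v : α → B) (r : B) (f : α →₀ B) :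
    Finsupp.linearCombination B (fun p => v p * r) f = Finsupp.linearCombination B v f * r :=
  (Finsupp.apply_linearCombination B (LinearMap.toSpanSingleton B B r) v f).symm

theorem IsFilteredDenominators.exists_forall_mul_eq_mul (hS : IsFilteredDenominators S)
    (F : Finset S) {t : B} (ht : t ∈ S) {x₁ x₂ : S → B}
    (h : ∀ p ∈ F, (p : B) * x₁ p = t ∧ (p : B) * x₂ p = t) :
    ∃ z, t * z ∈ S ∧ ∀ p ∈ F, x₁ p * z = x₂ p * z := by
  classical
  induction F using Finset.induction_on with
  | empty => exact ⟨1, by simpa using ht, by simp⟩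
  | insert p F _ ih =>
    obtain ⟨z, hzS, hz⟩ := ih fun q hq => h q (Finset.mem_insert_of_mem hq)
    obtain ⟨h₁, h₂⟩ := h p (Finset.mem_insert_self p F)
    have e₁ : (p : B) * (x₁ p * z) = t * z := by rw [← mul_assoc, h₁]
    have e₂ : (p : B) * (x₂ p * z) = t * z := by rw [← mul_assoc, h₂]
    obtain ⟨w, hw, hwS⟩ := hS.exists_mul_eq_mul_of_mul_eq p p.2 (x₁ p * z) (x₂ p * z)
      (e₁.trans e₂.symm) (e₁ ▸ hzS)
    refine ⟨z * w, by rwa [← mul_assoc, ← e₁], fun q hq => ?_⟩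
    rcases Finset.mem_insert.1 hq with rfl | hq
    · simpa only [mul_assoc] using hw
    · rw [← mul_assoc, ← mul_assoc, hz q hq]

/-- `f` becomes zero in the colimit over `𝒮`: written over a common denominator `t`,
its numerator vanishes. -/
def IsFracNull (f : S →₀ B) : Prop :=
  ∃ t ∈ S, ∃ x : S → B,
    (∀ p ∈ f.support, (p : B) * x p = t) ∧ Finsupp.linearCombination B x f = 0

theorem isFracNull_zero (hS : IsFilteredDenominators S) : IsFracNull (0 : S →₀ B) :=
  ⟨1, hS.one_mem, fun _ => 1, by simp, map_zero _⟩

theorem IsFracNull.smul (c : B) {f : S →₀ B} (hf : IsFracNull f) : IsFracNull (c • f) := by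
  obtain ⟨t, ht, x, hx, hf0⟩ := hf
  exact ⟨t, ht, x, fun p hp => hx p (Finsupp.support_smul hp), by rw [map_smul, hf0, smul_zero]⟩

theorem IsFracNull.add (hS : IsFilteredDenominators S) {f g : S →₀ B}
    (hf : IsFracNull f) (hg : IsFracNull g) : IsFracNull (f + g) := by
  classical
  obtain ⟨tf, htf, xf, hxf, hf0⟩ := hf
  obtain ⟨tg, htg, xg, hxg, hg0⟩ := hg
  obtain ⟨a, c, hac, haS⟩ := hS.exists_mul_eq_mul tf htf tg htg
  obtain ⟨z, hzS, hz⟩ := hS.exists_forall_mul_eq_mul (f.support ∩ g.support) haS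
    (x₁ := fun p => xf p * a) (x₂ := fun p => xg p * c) fun p hp =>
      ⟨by rw [← mul_assoc, hxf p (Finset.mem_inter.1 hp).1],
       by rw [← mul_assoc, hxg p (Finset.mem_inter.1 hp).2, hac]⟩
  let x : S → B := fun p => if p ∈ f.support then xf p * (a * z) else xg p * (c * z)
  have hxf' : ∀ p ∈ f.support, x p = xf p * (a * z) := fun p hp => if_pos hp
  have hxg' : ∀ p ∈ g.support, x p = xg p * (c * z) := fun p hp => by
    by_cases hpf : p ∈ f.support
    · rw [hxf' p hpf, ← mul_assoc, ← mul_assoc]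
      exact hz p (Finset.mem_inter.2 ⟨hpf, hp⟩)
    · exact if_neg hpf
  refine ⟨tf * a * z, hzS, x, fun p hp => ?_, ?_⟩
  · rcases Finset.mem_union.1 (Finsupp.support_add hp) with hp | hp
    · rw [hxf' p hp, ← mul_assoc, hxf p hp, mul_assoc]
    · rw [hxg' p hp, ← mul_assoc, hxg p hp, hac, mul_assoc]
  · rw [map_add, Finsupp.linearCombination_congr hxf', Finsupp.linearCombination_congr hxg',
      Finsupp.linearCombination_mul_right, Finsupp.linearCombination_mul_right, hf0, hg0,
      zero_mul, zero_mul, add_zero]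

theorem isFracNull_single_sub_single (hS : IsFilteredDenominators S) {s x : B}
    (hs : s ∈ S) (hsx : s * x ∈ S) :
    IsFracNull (Finsupp.single (⟨s * x, hsx⟩ : S) x - Finsupp.single (⟨s, hs⟩ : S) 1) := by
  classical
  have hsupp : ∀ p : S,
      p ∈ (Finsupp.single (⟨s * x, hsx⟩ : S) x - Finsupp.single (⟨s, hs⟩ : S) 1).support →
        (p : B) = s * x ∨ (p : B) = s := fun p hp => by
    rcases Finset.mem_union.1 (Finsupp.support_sub hp) with hp | hp
    · exact .inl (congrArg Subtype.val (Finset.mem_singleton.1 (Finsupp.support_single_subset hp)))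
    · exact .inr (congrArg Subtype.val (Finset.mem_singleton.1 (Finsupp.support_single_subset hp)))
  by_cases heq : s * x = s
  -- both terms sit at the same index, so `x` and `1` have to be equalized first
  · obtain ⟨z, hz, hzS⟩ := hS.exists_mul_eq_mul_of_mul_eq s hs x 1 (by rw [mul_one, heq]) hsx
    refine ⟨s * x * z, hzS, fun _ => z, fun p hp => ?_, ?_⟩
    · rcases hsupp p hp with h | h <;> rw [h]
      rw [heq]
    · simp [hz]
  · refine ⟨s * x, hsx, fun p => if (p : B) = s * x then 1 else x, fun p hp => ?_, ?_⟩
    · rcases hsupp p hp with h | h <;> simp [h, Ne.symm heq]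
    · simp [Ne.symm heq]

def fracNullSubmodule (hS : IsFilteredDenominators S) : Submodule B (S →₀ B) where
  carrier := {f | IsFracNull f}
  zero_mem' := isFracNull_zero hS
  add_mem' := IsFracNull.add hS
  smul_mem' := IsFracNull.smul

theorem IsFilteredDenominators.exists_mul_eq_mul_of_fracElt_eq (hS : IsFilteredDenominators S)
    {a b u : B} (hu : u ∈ S) (h : fracElt B S a u hu = fracElt B S b u hu) :
    ∃ x, a * x = b * x ∧ u * x ∈ S := by
  classical
  have hrel : Finsupp.single (⟨u, hu⟩ : S) (a - b) ∈ fracRel B S := by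
    rwa [fracElt, fracElt, Submodule.Quotient.eq, ← Finsupp.single_sub] at h
  have hle : fracRel B S ≤ fracNullSubmodule hS :=
    Submodule.span_le.2 fun _ ⟨_, _, hs, hsx, hv⟩ => hv ▸ isFracNull_single_sub_single hS hs hsx
  obtain ⟨t, ht, x, hx, h0⟩ := hle hrel
  by_cases hab : a - b = 0
  · exact ⟨1, by rw [sub_eq_zero.1 hab], by rwa [mul_one]⟩
  · refine ⟨x ⟨u, hu⟩, ?_, hx ⟨u, hu⟩ (by simp [hab]) ▸ ht⟩
    rw [Finsupp.linearCombination_single, smul_eq_mul] at h0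
    rwa [← sub_eq_zero, ← sub_mul]

end

theorem statement1_general (B : Type) [Ring B] (S : Set B)
    (h1 : (1 : B) ∈ S) (hmul : ∀ s ∈ S, ∀ t ∈ S, s * t ∈ S)
    -- filteredness of the category 𝒮 :
    (hfilt1 : ∀ s ∈ S, ∀ t ∈ S, ∃ x y : B, s * x = t * y ∧ s * x ∈ S)
    (hfilt2 : ∀ s ∈ S, ∀ x y : B, s * x = s * y → s * x ∈ S →
        ∃ z : B, x * z = y * z ∧ s * x * z ∈ S)
    (s : B) :
    Function.Surjective (fun m : Frac B S => s • m) ↔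
      ∀ b : B, ∃ c : B, ∃ u ∈ S, s * c = b * u := by
  have hS : IsFilteredDenominators S := ⟨h1, hfilt1, hfilt2⟩
  constructor
  · intro hsurj b
    obtain ⟨m, hm⟩ := hsurj (fracElt B S b 1 h1)
    obtain ⟨c, u, hu, rfl⟩ := hS.exists_eq_fracElt m
    have hcu : fracElt B S (s * c) u hu = fracElt B S (b * u) u hu := by
      rw [← smul_fracElt, ← fracElt_eq_mul_right b h1 hu (one_mul u)]
      exact hm
    obtain ⟨x, hx, hux⟩ := hS.exists_mul_eq_mul_of_fracElt_eq hu hcu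
    exact ⟨c * x, u * x, hux, by rw [← mul_assoc, hx, mul_assoc]⟩
  · intro h m
    obtain ⟨b, t, ht, rfl⟩ := hS.exists_eq_fracElt m
    obtain ⟨c, u, hu, hcu⟩ := h b
    refine ⟨fracElt B S c (t * u) (hmul t ht u hu), ?_⟩
    change s • _ = _
    rw [smul_fracElt, hcu, fracElt_eq_mul_right b ht _ rfl]

theorem statement1 (B : Type) [Ring B] (S : Set B)
    (h1 : (1 : B) ∈ S) (hmul : ∀ s ∈ S, ∀ t ∈ S, s * t ∈ S)
    -- filteredness of the category 𝒮 :
    (hfilt1 : ∀ s ∈ S, ∀ t ∈ S, ∃ x y : B, s * x = t * y ∧ s * x ∈ S)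
    (hfilt2 : ∀ s ∈ S, ∀ x y : B, s * x = s * y → s * x ∈ S →
        ∃ z : B, x * z = y * z ∧ s * x * z ∈ S)
    (s : B) (hs : s ∈ S) :
    Function.Surjective (fun m : Frac B S => s • m) ↔
      ∀ b : B, ∃ c : B, ∃ u ∈ S, s * c = b * u :=
  statement1_general B S h1 hmul hfilt1 hfilt2 s
end

section
/- Let B be a right Ore localisable ring with right Ore set S. Then the right fraction module B|S ≅ B[S⁻¹] is a filtered colimit of free left B-modules of rank one, and consequently B[S⁻¹] is flat as a left B-module. -/
/-! Fractions `b|s` and `bx|sx` agree, and the right Ore condition provides common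
denominators, so every finite family in `B|S` comes from a single copy `b ↦ b|s` of `B`.
Right fractions over `B` are left fractions over `Bᵐᵒᵖ`, so `b|s ↦ b s⁻¹` maps `B|S` to
Mathlib's Ore localisation, where `b s⁻¹ = 0` forces `bx = 0` for some `x` with `sx ∈ S`.
A relation `∑ aᵢ (bᵢ|s) = 0` therefore yields `(∑ aᵢ bᵢ) w = 0` with `sw ∈ S`, and
`bᵢ|s = (bᵢ w) • (1|sw)` shows that it is trivial through a free module of rank one. -/

open MulOpposite OreLocalization

section Fractions

variable {B : Type} [Ring B] {S : Set B}

noncomputable def toFrac {s : B} (hs : s ∈ S) : B →ₗ[B] Frac B S :=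
  (fracRel B S).mkQ ∘ₗ Finsupp.lsingle ⟨s, hs⟩

theorem toFrac_apply {b s : B} (hs : s ∈ S) : toFrac hs b = fracElt B S b s hs := rfl

theorem fracElt_expand (b x s : B) (hs : s ∈ S) (hsx : s * x ∈ S) :
    fracElt B S (b * x) (s * x) hsx = fracElt B S b s hs := by
  rw [fracElt, fracElt, Submodule.Quotient.eq]
  have h : Finsupp.single (⟨s * x, hsx⟩ : S) (b * x) - Finsupp.single ⟨s, hs⟩ b
      = b • (Finsupp.single (⟨s * x, hsx⟩ : S) x - Finsupp.single ⟨s, hs⟩ 1) := by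
    simp [smul_sub, Finsupp.smul_single]
  rw [h]
  exact Submodule.smul_mem _ _ (Submodule.subset_span ⟨s, x, hs, hsx, rfl⟩)

theorem fracElt_expand_of_eq (b x : B) {s t : B} (hs : s ∈ S) (ht : t ∈ S) (h : s * x = t) :
    fracElt B S (b * x) t ht = fracElt B S b s hs := by
  subst h
  exact fracElt_expand b x s hs ht

theorem sum_smul_fracElt {n : ℕ} (a b : Fin n → B) {s : B} (hs : s ∈ S) :
    ∑ i, a i • fracElt B S (b i) s hs = fracElt B S (∑ i, a i * b i) s hs := by
  simp only [← toFrac_apply, map_sum, ← smul_eq_mul, map_smul]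

end Fractions

section RightOre

variable {B : Type} [Ring B] {T : Submonoid B}

theorem exists_common_denom (hore : ∀ b : B, ∀ s ∈ T, ∃ u ∈ T, ∃ c : B, b * u = s * c)
    (b c : B) {s t : B} (hs : s ∈ T) (ht : t ∈ T) :
    ∃ (r : B) (hr : r ∈ T) (b' c' : B),
      fracElt B T b s hs = fracElt B T b' r hr ∧ fracElt B T c t ht = fracElt B T c' r hr := by
  obtain ⟨u, hu, x, htu⟩ := hore t s hs
  have hr : t * u ∈ T := T.mul_mem ht hu
  exact ⟨t * u, hr, b * x, c * u, (fracElt_expand_of_eq b x hs hr htu.symm).symm,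
    (fracElt_expand c u t ht hr).symm⟩

theorem exists_fracElt_eq (hore : ∀ b : B, ∀ s ∈ T, ∃ u ∈ T, ∃ c : B, b * u = s * c)
    (z : Frac B T) : ∃ (b s : B) (hs : s ∈ T), z = fracElt B T b s hs := by
  obtain ⟨f, rfl⟩ := Submodule.Quotient.mk_surjective _ z
  induction f using Finsupp.induction_linear with
  | zero => exact ⟨0, 1, T.one_mem, by simp [fracElt]⟩
  | add f g hf hg =>
    obtain ⟨b, s, hs, hf⟩ := hf
    obtain ⟨c, t, ht, hg⟩ := hg
    obtain ⟨r, hr, b', c', hb, hc⟩ := exists_common_denom hore b c hs ht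
    refine ⟨b' + c', r, hr, ?_⟩
    rw [Submodule.Quotient.mk_add, hf, hg, hb, hc, ← toFrac_apply, ← toFrac_apply,
      ← toFrac_apply, map_add]
  | single t b => exact ⟨b, t, t.2, rfl⟩

theorem exists_common_denom_fin (hore : ∀ b : B, ∀ s ∈ T, ∃ u ∈ T, ∃ c : B, b * u = s * c) :
    ∀ {n : ℕ} (x : Fin n → Frac B T),
      ∃ (s : B) (hs : s ∈ T) (b : Fin n → B), ∀ i, x i = fracElt B T (b i) s hs
  | 0, _ => ⟨1, T.one_mem, finZeroElim, finZeroElim⟩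
  | n + 1, x => by
    obtain ⟨s, hs, b, hb⟩ := exists_common_denom_fin hore (Fin.tail x)
    obtain ⟨c, t, ht, hc⟩ := exists_fracElt_eq hore (x 0)
    obtain ⟨u, hu, y, htu⟩ := hore t s hs
    have hr : t * u ∈ T := T.mul_mem ht hu
    refine ⟨t * u, hr, Fin.cons (c * u) (fun i => b i * y), Fin.cases ?_ fun i => ?_⟩
    · rw [Fin.cons_zero, hc, fracElt_expand c u t ht hr]
    · rw [Fin.cons_succ, fracElt_expand_of_eq (b i) y hs hr htu.symm]
      exact hb i

theorem nonempty_oreSet_op_of_rightOre (hore1 : ∀ b : B, ∀ s ∈ T, ∃ u ∈ T, ∃ c : B, b * u = s * c)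
    (hore2 : ∀ b : B, ∀ s ∈ T, s * b = 0 → ∃ t ∈ T, b * t = 0) : Nonempty (OreSet T.op) := by
  refine nonempty_oreSet_iff.mpr ⟨fun r₁ r₂ s h => ?_, fun r s => ?_⟩
  · have h0 : s.1.unop * (r₁.unop - r₂.unop) = 0 := by
      rw [mul_sub, sub_eq_zero]
      exact congrArg unop h
    obtain ⟨t, ht, hrt⟩ := hore2 _ _ s.2 h0
    refine ⟨⟨op t, ht⟩, unop_injective ?_⟩
    rw [sub_mul, sub_eq_zero] at hrt
    exact hrt
  · obtain ⟨u, hu, c, huc⟩ := hore1 r.unop s.1.unop s.2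
    exact ⟨op c, ⟨op u, hu⟩, unop_injective huc⟩

end RightOre

section Localization

variable {B : Type} [Ring B] {T : Submonoid B} [OreSet T.op]

-- `Bᵐᵒᵖ` acts on `B` by right multiplication, so `b /ₒ op s` is the right fraction `b s⁻¹`.
noncomputable def finsuppToOreLocalization : (↥(T : Set B) →₀ B) →+ OreLocalization T.op B :=
  Finsupp.liftAddHom (N := OreLocalization T.op B) fun t : ↥(T : Set B) =>
    AddMonoidHom.mk' (fun b : B => b /ₒ (⟨op t.1, t.2⟩ : T.op)) fun _ _ => add_oreDiv.symm

theorem finsuppToOreLocalization_single (t : ↥(T : Set B)) (b : B) :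
    finsuppToOreLocalization (Finsupp.single t b) = b /ₒ (⟨op t.1, t.2⟩ : T.op) :=
  Finsupp.liftAddHom_apply_single _ _ _

theorem finsuppToOreLocalization_eq_zero_of_mem {v : ↥(T : Set B) →₀ B}
    (hv : v ∈ fracRel B T) : finsuppToOreLocalization v = 0 := by
  obtain ⟨n, a, g, rfl⟩ := Submodule.mem_span_set'.mp hv
  refine (map_sum _ _ _).trans (Finset.sum_eq_zero fun i _ => ?_)
  obtain ⟨s, x, hs, hsx, hg⟩ := (g i).2
  rw [hg, smul_sub, Finsupp.smul_single, Finsupp.smul_single, smul_eq_mul, smul_eq_mul, mul_one,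
    map_sub, finsuppToOreLocalization_single, finsuppToOreLocalization_single, sub_eq_zero,
    OreLocalization.expand (a i) ⟨op s, hs⟩ (op x) hsx]
  rfl

theorem fracElt_eq_zero_iff {b s : B} (hs : s ∈ T) :
    fracElt B T b s hs = 0 ↔ ∃ x : B, b * x = 0 ∧ s * x ∈ T := by
  refine ⟨fun h => ?_, fun ⟨x, hbx, hsx⟩ => ?_⟩
  · have h0 : b /ₒ (⟨op s, hs⟩ : T.op) = 0 := by
      rw [← finsuppToOreLocalization_single ⟨s, hs⟩ b]
      exact finsuppToOreLocalization_eq_zero_of_mem ((Submodule.Quotient.mk_eq_zero _).mp h)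
    rw [OreLocalization.zero_def, oreDiv_eq_iff] at h0
    obtain ⟨u, x, hbx, hsx⟩ := h0
    refine ⟨x.unop, ?_, ?_⟩
    · simpa using hbx.symm
    · have hu : (u : Bᵐᵒᵖ) = x * op s := by simpa using hsx
      simpa [hu] using u.2
  · rw [← fracElt_expand b x s hs hsx, hbx, ← toFrac_apply, map_zero]

theorem exists_mul_eq_mul_of_oreSet_op (b : B) {s : B} (hs : s ∈ T) :
    ∃ u ∈ T, ∃ c : B, b * u = s * c :=
  let s' : T.op := ⟨op s, hs⟩
  ⟨(oreDenom (op b) s').1.unop, (oreDenom (op b) s').2, (oreNum (op b) s').unop,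
    congrArg unop (ore_eq (op b) s')⟩

theorem exists_eq_smul_of_sum_smul_eq_zero {n : ℕ} (a : Fin n → B) (x : Fin n → Frac B T)
    (hax : ∑ i, a i • x i = 0) :
    ∃ (y : Frac B T) (c : Fin n → B), (∀ i, x i = c i • y) ∧ ∑ i, a i * c i = 0 := by
  obtain ⟨s, hs, b, hb⟩ :=
    exists_common_denom_fin (fun b _ hs => exists_mul_eq_mul_of_oreSet_op b hs) x
  obtain rfl : x = fun i => fracElt B T (b i) s hs := funext hb
  rw [sum_smul_fracElt, fracElt_eq_zero_iff] at hax
  obtain ⟨w, habw, hsw⟩ := hax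
  refine ⟨fracElt B T 1 (s * w) hsw, fun i => b i * w, fun i => ?_, ?_⟩
  · rw [← toFrac_apply, ← map_smul, toFrac_apply, smul_eq_mul, mul_one, fracElt_expand]
  · simpa only [← mul_assoc, Finset.sum_mul] using habw

end Localization

theorem statement5 (B : Type) [Ring B] (S : Set B)
    (h1 : (1 : B) ∈ S) (hmul : ∀ s ∈ S, ∀ t ∈ S, s * t ∈ S)
    -- S is a right Ore set:
    (hore1 : ∀ b : B, ∀ s ∈ S, ∃ u ∈ S, ∃ c : B, b * u = s * c)
    (hore2 : ∀ b : B, ∀ s ∈ S, s * b = 0 → ∃ t ∈ S, b * t = 0) :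
    -- B|S is the filtered colimit over 𝒮 of free rank-one left B-modules B|s :
    -- (i) the transition maps (right multiplication by x) are compatible:
    (∀ (b x s : B) (hs : s ∈ S) (hsx : s * x ∈ S),
        fracElt B S (b * x) (s * x) hsx = fracElt B S b s hs) ∧
    -- (ii) every element of B|S lies in the image of some B|s :
    (∀ z : Frac B S, ∃ (b s : B) (hs : s ∈ S), z = fracElt B S b s hs) ∧
    -- (iii) an element b|s vanishes iff it dies at some later stage of the colimit:
    (∀ (b s : B) (hs : s ∈ S),
        fracElt B S b s hs = 0 ↔ ∃ x : B, b * x = 0 ∧ s * x ∈ S) ∧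
    -- consequently B|S ≅ B[S⁻¹] is flat as a left B-module (equational criterion):
    (∀ (n : ℕ) (a : Fin n → B) (x : Fin n → Frac B S),
        (∑ i, a i • x i) = 0 →
          ∃ (m : ℕ) (y : Fin m → Frac B S) (c : Fin n → Fin m → B),
            (∀ i, x i = ∑ j, c i j • y j) ∧ ∀ j, (∑ i, a i * c i j) = 0) := by
  let T : Submonoid B := ⟨⟨S, fun ha hb => hmul _ ha _ hb⟩, h1⟩
  obtain ⟨_⟩ := nonempty_oreSet_op_of_rightOre (T := T) hore1 hore2
  refine ⟨fracElt_expand, exists_fracElt_eq (T := T) hore1,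
    fun b s hs => fracElt_eq_zero_iff (T := T) hs, fun n a x hax => ?_⟩
  obtain ⟨y, c, hx, hac⟩ := exists_eq_smul_of_sum_smul_eq_zero (T := T) a x hax
  exact ⟨1, fun _ => y, fun i _ => c i, by simpa using hx, fun _ => by simpa using hac⟩
end

section
/- Let A be a ring and s ∈ A. The following are equivalent: (1) the set {1, s, s², ...} is a right Ore set in A; (2) the natural map A ⊗_{ℤ[s]} ℤ[s,s⁻¹] → A[s⁻¹] is an isomorphism of left A-modules, where ℤ[s] → A sends the variable to s; (3) the colimit of the system A → A → A → ⋯ (maps given by right multiplication by s) is a strictly s-local A-module. -/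
/-!
STATEMENT 8: for a ring `A` and an element `s ∈ A`, the following are equivalent:
(1) `{1, s, s², …}` is a right Ore set in `A`;
(2) the natural map `A ⊗_{ℤ[s]} ℤ[s,s⁻¹] → A[s⁻¹]` is an isomorphism of left
    `A`-modules, where `A ⊗_{ℤ[s]} ℤ[s,s⁻¹]` is identified with the colimit of the
    system `A → A → A → ⋯` of right-multiplication-by-`s` maps;
(3) that colimit is a strictly `s`-local `A`-module.
-/

/-- Relations presenting the colimit of `A → A → ⋯` (right multiplication by `s`). -/
noncomputable def telRel (A : Type) [Ring A] (s : A) : Submodule A (ℕ →₀ A) :=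
  Submodule.span A { v | ∃ n : ℕ, v = Finsupp.single n 1 - Finsupp.single (n + 1) s }

/-- The colimit of the system `A → A → A → ⋯` of right multiplications by `s`,
as a left `A`-module; it realises `A ⊗_{ℤ[s]} ℤ[s,s⁻¹]`. -/
abbrev Tel (A : Type) [Ring A] (s : A) : Type :=
  (ℕ →₀ A) ⧸ telRel A s

/-- The element of the colimit given by `a ∈ A` placed at stage `n`. -/
noncomputable def telElt (A : Type) [Ring A] (s : A) (n : ℕ) (a : A) : Tel A s :=
  Submodule.Quotient.mk (Finsupp.single n a)

section Aux

variable {A : Type} [Ring A] {s : A}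

lemma telElt_add (n : ℕ) (a b : A) :
    telElt A s n a + telElt A s n b = telElt A s n (a + b) := by
  simp [telElt, ← Submodule.Quotient.mk_add, Finsupp.single_add]

lemma telElt_sub (n : ℕ) (a b : A) :
    telElt A s n a - telElt A s n b = telElt A s n (a - b) := by
  simp [telElt, ← Submodule.Quotient.mk_sub, Finsupp.single_sub]

lemma smul_telElt (a : A) (n : ℕ) (b : A) :
    a • telElt A s n b = telElt A s n (a * b) := by
  simp [telElt, ← Submodule.Quotient.mk_smul, Finsupp.smul_single, smul_eq_mul]

lemma telElt_zero (n : ℕ) : telElt A s n (0 : A) = 0 := by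
  simp [telElt]

lemma telElt_succ (n : ℕ) (a : A) : telElt A s n a = telElt A s (n + 1) (a * s) := by
  rw [telElt, telElt, Submodule.Quotient.eq]
  have h : Finsupp.single n 1 - Finsupp.single (n + 1) s ∈ telRel A s :=
    Submodule.subset_span ⟨n, rfl⟩
  have := Submodule.smul_mem (telRel A s) a h
  rwa [smul_sub, Finsupp.smul_single, Finsupp.smul_single, smul_eq_mul, smul_eq_mul,
    mul_one] at this

lemma telElt_shift (n k : ℕ) (a : A) : telElt A s n a = telElt A s (n + k) (a * s ^ k) := by
  induction k with
  | zero => simp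
  | succ k ih => rw [ih, telElt_succ, pow_succ, ← mul_assoc, Nat.add_assoc]

lemma telElt_eq_zero_of (n : ℕ) {a : A} {m : ℕ} (h : a * s ^ m = 0) :
    telElt A s n a = 0 := by
  rw [telElt_shift n m a, h]
  simp [telElt]

lemma tel_exists (x : Tel A s) : ∃ (n : ℕ) (a : A), x = telElt A s n a := by
  obtain ⟨v, rfl⟩ := Submodule.Quotient.mk_surjective _ x
  induction v using Finsupp.induction with
  | zero => exact ⟨0, 0, by simp [telElt]⟩
  | single_add m b w _ _ ih =>
    obtain ⟨n, a, ha⟩ := ih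
    refine ⟨max m n, b * s ^ (max m n - m) + a * s ^ (max m n - n), ?_⟩
    have h1 : (Submodule.Quotient.mk (Finsupp.single m b + w) : Tel A s)
        = telElt A s m b + Submodule.Quotient.mk w := by
      simp [telElt, ← Submodule.Quotient.mk_add]
    rw [h1, ha, telElt_shift m (max m n - m) b, telElt_shift n (max m n - n) a,
      Nat.add_sub_cancel' (le_max_left m n), Nat.add_sub_cancel' (le_max_right m n),
      telElt_add]

lemma tel_d_apply (c : ℕ →₀ A) (j : ℕ) :
    (c.sum fun k r => Finsupp.single (k+1) (r * s)) (j+1) = c j * s := by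
  rw [Finsupp.sum_apply]
  have : (c.sum fun k r => (Finsupp.single (k+1) (r * s)) (j+1))
      = c.sum fun k r => if k = j then r * s else 0 := by
    apply Finsupp.sum_congr; intro k _; rw [Finsupp.single_apply]; simp
  rw [this, Finsupp.sum_ite_eq' c j (fun _ r => r * s)]
  by_cases h : j ∈ c.support
  · simp [h]
  · simp at h; simp [h]

lemma tel_d_apply_zero (c : ℕ →₀ A) :
    (c.sum fun k r => Finsupp.single (k+1) (r * s)) 0 = 0 := by
  rw [Finsupp.sum_apply]
  apply Finset.sum_eq_zero
  intro k _
  simp [Finsupp.single_apply]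

lemma exists_of_mem_telRel {n : ℕ} {a : A}
    (h : Finsupp.single n a ∈ telRel _ s) : ∃ m : ℕ, a * s ^ m = 0 := by
  rw [telRel] at h
  have hset : { v : ℕ →₀ A | ∃ n : ℕ, v = Finsupp.single n 1 - Finsupp.single (n + 1) s }
      = Set.range (fun k => Finsupp.single k (1:A) - Finsupp.single (k + 1) s) := by
    ext v; simp [eq_comm]
  rw [hset, Finsupp.mem_span_range_iff_exists_finsupp] at h
  obtain ⟨c, hc⟩ := h
  set d : ℕ →₀ A := c.sum fun k r => Finsupp.single (k+1) (r * s) with hd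
  have hc2 : (c.sum fun k r => Finsupp.single k r - Finsupp.single (k+1) (r * s))
      = Finsupp.single n a := by
    rw [← hc]
    apply Finsupp.sum_congr
    intro k _
    rw [smul_sub, Finsupp.smul_single, Finsupp.smul_single, smul_eq_mul, smul_eq_mul, mul_one]
  have hc' : c - d = Finsupp.single n a := by
    rw [← hc2, Finsupp.sum_sub, Finsupp.sum_single]
  have hco : ∀ k, c k - d k = (Finsupp.single n a) k := by
    intro k
    rw [← hc', Finsupp.sub_apply]
  have h0 : ∀ k, k < n → c k = 0 := by
    intro k
    induction k with
    | zero =>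
      intro hk
      have := hco 0
      rw [tel_d_apply_zero, Finsupp.single_apply] at this
      simpa [Nat.ne_of_gt hk] using this
    | succ j ih =>
      intro hk
      have := hco (j+1)
      rw [tel_d_apply c j, Finsupp.single_apply, if_neg (by omega : ¬ n = j + 1)] at this
      have hj : c j = 0 := ih (Nat.lt_of_succ_lt hk)
      rw [hj, zero_mul, sub_zero] at this
      simpa using this
  have h1 : ∀ k, c (n + k) = a * s ^ k := by
    intro k
    induction k with
    | zero =>
      have := hco n
      rw [Finsupp.single_apply, if_pos rfl] at this
      have hdn : d n = 0 := by
        cases n with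
        | zero => exact tel_d_apply_zero c
        | succ j => rw [tel_d_apply c j, h0 j (Nat.lt_succ_self j), zero_mul]
      rw [hdn, sub_zero] at this
      simpa using this
    | succ k ih =>
      have := hco (n + k + 1)
      rw [tel_d_apply c (n+k), Finsupp.single_apply,
        if_neg (by omega)] at this
      rw [ih] at this
      have h2 : c (n + k + 1) = a * s ^ k * s := sub_eq_zero.mp (by simpa using this)
      rw [show n + (k+1) = n + k + 1 by omega, h2, pow_succ, mul_assoc]
  refine ⟨(c.support.sup id) + 1, ?_⟩
  have hout : c (n + (c.support.sup id + 1)) = 0 := by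
    by_contra hne
    have hmem : n + (c.support.sup id + 1) ∈ c.support := Finsupp.mem_support_iff.mpr hne
    have := Finset.le_sup (f := id) hmem
    simp only [id] at this
    omega
  rw [← h1, hout]

lemma exists_of_telElt_eq_zero {n : ℕ} {a : A} (h : telElt A s n a = 0) :
    ∃ m : ℕ, a * s ^ m = 0 :=
  exists_of_mem_telRel ((Submodule.Quotient.mk_eq_zero _).mp h)

lemma ore_pow_left (ore1 : ∀ b : A, ∃ (c : A) (n : ℕ), s * c = b * s ^ n) :
    ∀ (b : A) (m : ℕ), ∃ (c : A) (n : ℕ), s ^ m * c = b * s ^ n := by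
  intro b m
  induction m with
  | zero => exact ⟨b, 0, by simp⟩
  | succ m ih =>
    obtain ⟨c, n, hcn⟩ := ih
    obtain ⟨c', k, hk⟩ := ore1 c
    exact ⟨c', n + k, by rw [pow_succ, mul_assoc, hk, ← mul_assoc, hcn, mul_assoc, ← pow_add]⟩

lemma ore_pow_ann (ore2 : ∀ b : A, s * b = 0 → ∃ n : ℕ, b * s ^ n = 0) :
    ∀ (b : A) (m : ℕ), s ^ m * b = 0 → ∃ n : ℕ, b * s ^ n = 0 := by
  intro b m
  induction m generalizing b with
  | zero => intro h; exact ⟨0, by simpa using h⟩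
  | succ m ih =>
    intro h
    rw [pow_succ, mul_assoc] at h
    obtain ⟨n, hn⟩ := ih (s * b) h
    rw [mul_assoc] at hn
    obtain ⟨k, hk⟩ := ore2 _ hn
    exact ⟨n + k, by rw [pow_add, ← mul_assoc]; exact hk⟩

/-- (1) ↔ (3) -/
lemma ore_iff_bij :
    ((∀ b : A, ∃ (c : A) (n : ℕ), s * c = b * s ^ n) ∧
        (∀ b : A, s * b = 0 → ∃ n : ℕ, b * s ^ n = 0)) ↔
      Function.Bijective (fun x : Tel A s => s • x) := by
  constructor
  · rintro ⟨ore1, ore2⟩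
    constructor
    · intro x y hxy
      have hz : s • (x - y) = 0 := by
        rw [smul_sub]
        simpa using sub_eq_zero.mpr hxy
      obtain ⟨n, a, ha⟩ := tel_exists (x - y)
      rw [ha, smul_telElt] at hz
      obtain ⟨m, hm⟩ := exists_of_telElt_eq_zero hz
      rw [mul_assoc] at hm
      obtain ⟨k, hk⟩ := ore2 _ hm
      rw [mul_assoc, ← pow_add] at hk
      have : x - y = 0 := by rw [ha]; exact telElt_eq_zero_of n hk
      exact sub_eq_zero.mp this
    · intro y
      obtain ⟨n, b, hb⟩ := tel_exists y
      obtain ⟨c, m, hcm⟩ := ore1 b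
      refine ⟨telElt A s (n + m) c, ?_⟩
      simp only [smul_telElt]
      rw [hcm, hb, telElt_shift n m b]
  · intro hbij
    constructor
    · intro b
      obtain ⟨x, hx⟩ := hbij.2 (telElt A s 0 b)
      obtain ⟨m, c, hc⟩ := tel_exists x
      rw [hc] at hx; simp only [smul_telElt] at hx
      have h1 : telElt A s m (s * c) = telElt A s m (b * s ^ m) := by
        rw [hx, telElt_shift 0 m b, Nat.zero_add]
      have h2 : telElt A s m (s * c - b * s ^ m) = 0 := by
        rw [← telElt_sub, h1, sub_self]
      obtain ⟨k, hk⟩ := exists_of_telElt_eq_zero h2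
      rw [sub_mul] at hk
      refine ⟨c * s ^ k, m + k, ?_⟩
      rw [← mul_assoc, pow_add, ← mul_assoc]
      exact sub_eq_zero.mp hk
    · intro b hb
      have h1 : (fun x : Tel A s => s • x) (telElt A s 0 b) = (fun x : Tel A s => s • x) 0 := by
        simp only [smul_telElt, smul_zero, hb, telElt_zero]
      have := hbij.1 h1
      exact exists_of_telElt_eq_zero this
end Aux
section Main

open MulOpposite

variable {A : Type} [Ring A] {s : A}

lemma oreSet_nonempty
    (ore1 : ∀ b : A, ∃ (c : A) (n : ℕ), s * c = b * s ^ n)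
    (ore2 : ∀ b : A, s * b = 0 → ∃ n : ℕ, b * s ^ n = 0) :
    Nonempty (OreLocalization.OreSet (Submonoid.powers (op s))) := by
  rw [OreLocalization.nonempty_oreSet_iff]
  constructor
  · rintro r₁ r₂ σ h
    obtain ⟨m, hm⟩ := σ.2
    have hm' : (op s) ^ m = (σ : Aᵐᵒᵖ) := hm
    have h' : s ^ m * (r₁.unop - r₂.unop) = 0 := by
      have h2 := congrArg MulOpposite.unop h
      simp only [unop_mul] at h2
      rw [← hm', ← op_pow, unop_op] at h2
      rw [mul_sub, h2, sub_self]
    obtain ⟨n, hn⟩ := ore_pow_ann ore2 _ m h'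
    refine ⟨⟨(op s)^n, ⟨n, rfl⟩⟩, ?_⟩
    apply unop_injective
    simp only [unop_mul, ← op_pow, unop_op]
    rw [sub_mul] at hn
    exact sub_eq_zero.mp hn
  · intro r σ
    obtain ⟨m, hm⟩ := σ.2
    have hm' : (op s) ^ m = (σ : Aᵐᵒᵖ) := hm
    obtain ⟨c, n, hcn⟩ := ore_pow_left ore1 r.unop m
    refine ⟨op c, ⟨(op s)^n, ⟨n, rfl⟩⟩, ?_⟩
    apply unop_injective
    simp only [unop_mul, ← op_pow, unop_op]
    rw [← hm', ← op_pow, unop_op]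
    exact hcn.symm

lemma kernel_of_universal
    (L : Type) [Ring L] (f : A →+* L) (hinv : IsUnit (f s))
    (huniv : ∀ (C : Type) [Ring C] (g : A →+* C), IsUnit (g s) →
        ∃! h : L →+* C, h.comp f = g)
    (ore1 : ∀ b : A, ∃ (c : A) (n : ℕ), s * c = b * s ^ n)
    (ore2 : ∀ b : A, s * b = 0 → ∃ n : ℕ, b * s ^ n = 0) :
    ∀ a : A, f a = 0 → ∃ m : ℕ, a * s ^ m = 0 := by
  obtain ⟨oreinst⟩ := oreSet_nonempty ore1 ore2
  letI := oreinst
  set S' := Submonoid.powers (op s)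
  let N : Aᵐᵒᵖ →+* OreLocalization S' Aᵐᵒᵖ := OreLocalization.numeratorRingHom
  let g : A →+* (OreLocalization S' Aᵐᵒᵖ)ᵐᵒᵖ :=
    { toFun := fun a => op (N (op a))
      map_one' := by simp
      map_mul' := fun a b => by simp [map_mul]
      map_zero' := by simp
      map_add' := fun a b => by simp [map_add] }
  have hgs : IsUnit (g s) := by
    have h1 : IsUnit (OreLocalization.numeratorHom ((⟨op s, ⟨1, pow_one _⟩⟩ : S') : Aᵐᵒᵖ)) :=
      OreLocalization.numerator_isUnit _
    exact IsUnit.op h1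
  intro a hfa
  obtain ⟨h, hh, _⟩ := huniv _ g hgs
  have hga : g a = 0 := by
    have : g a = h (f a) := by rw [← hh]; rfl
    rw [this, hfa, map_zero]
  have hN : N (op a) = 0 := (op_eq_zero_iff _).mp hga
  rw [show N (op a) = (op a) /ₒ (1 : S') from OreLocalization.numeratorRingHom_apply _,
    show (0 : OreLocalization S' Aᵐᵒᵖ) = (0 : Aᵐᵒᵖ) /ₒ (1 : S') from OreLocalization.zero_def,
    OreLocalization.oreDiv_eq_iff] at hN
  obtain ⟨w, z, h1, h2⟩ := hN
  simp only [Submonoid.smul_def, smul_eq_mul, OneMemClass.coe_one, mul_one, mul_zero] at h1 h2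
  obtain ⟨m, hm⟩ := w.2
  have hm' : (op s) ^ m = (w : Aᵐᵒᵖ) := hm
  have hz : z * op a = 0 := h1.symm
  rw [← h2, ← hm'] at hz
  have := congrArg MulOpposite.unop hz
  rw [← op_pow] at this
  simp only [unop_mul, unop_op, unop_zero] at this
  exact ⟨m, this⟩

end Main
section Forward

variable {A : Type} [Ring A] {s : A}

lemma main_forward
    (L : Type) [Ring L] (f : A →+* L) (hinv : IsUnit (f s))
    (huniv : ∀ (C : Type) [Ring C] (g : A →+* C), IsUnit (g s) →
        ∃! h : L →+* C, h.comp f = g)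
    (ore1 : ∀ b : A, ∃ (c : A) (n : ℕ), s * c = b * s ^ n)
    (ore2 : ∀ b : A, s * b = 0 → ∃ n : ℕ, b * s ^ n = 0) :
    ∃ e : Tel A s ≃+ L,
      (∀ (a : A) (x : Tel A s), e (a • x) = f a * e x) ∧
      (∀ (n : ℕ) (a : A), e (telElt A s n a) = f a * (↑hinv.unit⁻¹ : L) ^ n) := by
  set u := hinv.unit with hu
  set v : L := (↑u⁻¹ : L) with hv
  have hus : (↑u : L) = f s := hinv.unit_spec
  have huv : ∀ k : ℕ, (↑u : L) ^ k * v ^ k = 1 := by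
    intro k
    rw [hv, ← Units.val_pow_eq_pow_val, ← Units.val_pow_eq_pow_val, ← Units.val_mul,
      inv_pow, mul_inv_cancel, Units.val_one]
  have hvu : ∀ k : ℕ, v ^ k * (↑u : L) ^ k = 1 := by
    intro k
    rw [hv, ← Units.val_pow_eq_pow_val, ← Units.val_pow_eq_pow_val, ← Units.val_mul,
      inv_pow, inv_mul_cancel, Units.val_one]
  have hfs : ∀ k : ℕ, f (s ^ k) = (↑u : L) ^ k := by
    intro k; rw [map_pow, hus]
  have hker := kernel_of_universal L f hinv huniv ore1 ore2
  -- commuting fractions past elements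
  have hcomm : ∀ (b : A) (n : ℕ), ∃ (c : A) (k : ℕ), v ^ n * f b = f c * v ^ k := by
    intro b n
    obtain ⟨c, k, hck⟩ := ore_pow_left ore1 b n
    refine ⟨c, k, ?_⟩
    have h1 : (↑u : L) ^ n * f c = f b * (↑u : L) ^ k := by
      have h2 := congrArg f hck
      rwa [map_mul, map_mul, hfs, hfs] at h2
    calc v ^ n * f b
        = v ^ n * (f b * ((↑u : L) ^ k * v ^ k)) := by rw [huv, mul_one]
      _ = v ^ n * (f b * (↑u : L) ^ k * v ^ k) := by rw [mul_assoc (f b)]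
      _ = v ^ n * ((↑u : L) ^ n * f c * v ^ k) := by rw [← h1]
      _ = v ^ n * (↑u : L) ^ n * f c * v ^ k := by rw [← mul_assoc, ← mul_assoc]
      _ = f c * v ^ k := by rw [hvu, one_mul]
  -- the subring of elements of the form f a * v ^ n
  let W : Subring L :=
    { carrier := { x | ∃ (n : ℕ) (a : A), x = f a * v ^ n }
      zero_mem' := ⟨0, 0, by simp⟩
      one_mem' := ⟨0, 1, by simp⟩
      add_mem' := by
        rintro x y ⟨n, a, rfl⟩ ⟨m, b, rfl⟩
        refine ⟨n + m, a * s ^ m + b * s ^ n, ?_⟩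
        have e1 : f (a * s ^ m) * v ^ (n + m) = f a * v ^ n := by
          rw [map_mul, hfs, add_comm n m, pow_add, mul_assoc,
            ← mul_assoc ((↑u : L) ^ m), huv, one_mul]
        have e2 : f (b * s ^ n) * v ^ (n + m) = f b * v ^ m := by
          rw [map_mul, hfs, pow_add, mul_assoc, ← mul_assoc ((↑u : L) ^ n), huv, one_mul]
        rw [map_add, add_mul, e1, e2]
      neg_mem' := by
        rintro x ⟨n, a, rfl⟩
        exact ⟨n, -a, by rw [map_neg, neg_mul]⟩
      mul_mem' := by
        rintro x y ⟨n, a, rfl⟩ ⟨m, b, rfl⟩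
        obtain ⟨c, k, hc⟩ := hcomm b n
        refine ⟨k + m, a * c, ?_⟩
        calc f a * v ^ n * (f b * v ^ m)
            = f a * (v ^ n * f b * v ^ m) := by rw [mul_assoc, ← mul_assoc (v ^ n)]
          _ = f a * (f c * v ^ k * v ^ m) := by rw [hc]
          _ = f (a * c) * v ^ (k + m) := by
              rw [map_mul, pow_add, mul_assoc (f c), ← mul_assoc (f a)] }
  have hWmem : ∀ a : A, f a ∈ W := fun a => ⟨0, a, by simp⟩
  let fW : A →+* W := f.codRestrict W hWmem
  have hfWs : IsUnit (fW s) := by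
    have hvW : v ∈ W := ⟨1, 1, by simp⟩
    refine isUnit_iff_exists.mpr ⟨⟨v, hvW⟩, ?_, ?_⟩
    · apply Subtype.ext
      show f s * v = 1
      rw [← hus, hv]
      exact u.mul_inv
    · apply Subtype.ext
      show v * f s = 1
      rw [← hus, hv]
      exact u.inv_mul
  -- surjectivity of the fraction description
  have hsurj : ∀ x : L, ∃ (n : ℕ) (a : A), x = f a * v ^ n := by
    obtain ⟨hW, hWc, _⟩ := huniv W fW hfWs
    obtain ⟨hid, _, hiduniq⟩ := huniv L f hinv
    have h1 : W.subtype.comp hW = hid := by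
      apply hiduniq
      rw [RingHom.comp_assoc, hWc]
      rfl
    have h2 : RingHom.id L = hid := by
      apply hiduniq
      ext a
      simp
    intro x
    have h3 : ((hW x : W) : L) = x := by
      have h4 : (W.subtype.comp hW) x = (RingHom.id L) x := by rw [h1, ← h2]
      simpa using h4
    obtain ⟨n, a, hx⟩ := (hW x).2
    exact ⟨n, a, by rw [← h3]; exact hx⟩
  -- the comparison map
  letI : Module A L := Module.compHom L f
  have hsm : ∀ (a : A) (x : L), a • x = f a * x := fun _ _ => rfl
  let gl : ℕ → (A →ₗ[A] L) := fun n =>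
    { toFun := fun a => f a * v ^ n
      map_add' := by intro a b; rw [map_add, add_mul]
      map_smul' := by
        intro a b; simp only [smul_eq_mul, map_mul, RingHom.id_apply, mul_assoc]; rfl }
  let ψ : (ℕ →₀ A) →ₗ[A] L := Finsupp.lsum ℕ gl
  have hψ : ∀ (n : ℕ) (a : A), ψ (Finsupp.single n a) = f a * v ^ n := by
    intro n a; simp [ψ, gl]
  have hle : telRel A s ≤ LinearMap.ker ψ := by
    rw [telRel, Submodule.span_le]
    rintro w ⟨n, rfl⟩
    simp only [SetLike.mem_coe, LinearMap.mem_ker, map_sub, hψ]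
    rw [map_one, one_mul, ← hus, pow_succ', ← mul_assoc, hv, u.mul_inv, one_mul, sub_self]
  let φ : Tel A s →ₗ[A] L := Submodule.liftQ _ ψ hle
  have hφ : ∀ (n : ℕ) (a : A), φ (telElt A s n a) = f a * v ^ n := by
    intro n a
    rw [telElt, show φ (Submodule.Quotient.mk (Finsupp.single n a))
      = ψ (Finsupp.single n a) from rfl, hψ]
  have hφbij : Function.Bijective φ := by
    constructor
    · intro x y hxy
      have hz : φ (x - y) = 0 := by rw [map_sub, hxy, sub_self]
      obtain ⟨n, a, ha⟩ := tel_exists (x - y)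
      rw [ha, hφ] at hz
      have hfa : f a = 0 := by
        have h5 : f a * v ^ n * (↑u : L) ^ n = 0 * (↑u : L) ^ n := by rw [hz]
        rwa [mul_assoc, hvu n, mul_one, zero_mul] at h5
      obtain ⟨m, hm⟩ := hker a hfa
      have : x - y = 0 := by rw [ha]; exact telElt_eq_zero_of n hm
      exact sub_eq_zero.mp this
    · intro x
      obtain ⟨n, a, hx⟩ := hsurj x
      exact ⟨telElt A s n a, by rw [hφ, hx]⟩
  refine ⟨AddEquiv.ofBijective φ hφbij, ?_, ?_⟩
  · intro a x
    show φ (a • x) = f a * φ x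
    rw [map_smul, hsm]
  · intro n a
    show φ (telElt A s n a) = f a * v ^ n
    exact hφ n a

end Forward

theorem statement8 (A : Type) [Ring A] (s : A)
    (L : Type) [Ring L] (f : A →+* L)
    -- f : A → L is the universal s-inverting ring homomorphism:
    (hinv : IsUnit (f s))
    (huniv : ∀ (C : Type) [Ring C] (g : A →+* C), IsUnit (g s) →
        ∃! h : L →+* C, h.comp f = g) :
    -- (1) ↔ (2):
    (((∀ b : A, ∃ (c : A) (n : ℕ), s * c = b * s ^ n) ∧
        (∀ b : A, s * b = 0 → ∃ n : ℕ, b * s ^ n = 0)) ↔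
      (∃ e : Tel A s ≃+ L,
        (∀ (a : A) (x : Tel A s), e (a • x) = f a * e x) ∧
        (∀ (n : ℕ) (a : A), e (telElt A s n a) = f a * (↑hinv.unit⁻¹ : L) ^ n))) ∧
    -- (1) ↔ (3):
    (((∀ b : A, ∃ (c : A) (n : ℕ), s * c = b * s ^ n) ∧
        (∀ b : A, s * b = 0 → ∃ n : ℕ, b * s ^ n = 0)) ↔
      Function.Bijective (fun x : Tel A s => s • x)) := by
  have p13 := @ore_iff_bij A _ s
  refine ⟨⟨?_, ?_⟩, p13⟩
  · rintro ⟨ore1, ore2⟩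
    exact main_forward L f hinv huniv ore1 ore2
  · rintro ⟨e, h1, h2⟩
    apply p13.mpr
    constructor
    · intro x y hxy
      simp only [] at hxy
      have h3 : e (s • x) = e (s • y) := by rw [hxy]
      rw [h1, h1] at h3
      exact e.injective (hinv.mul_left_cancel h3)
    · intro y
      refine ⟨e.symm ((↑hinv.unit⁻¹ : L) * e y), ?_⟩
      apply e.injective
      simp only []
      rw [h1, AddEquiv.apply_symm_apply, ← mul_assoc, hinv.mul_val_inv, one_mul]
end

section
/- Let A be a ring and S ⊆ A a central subset (every s ∈ S commutes with every element of A). Then the universal S-inverting ring A[S⁻¹] = A ∗_{ℤ⟨S⟩} ℤ⟨S,S⁻¹⟩ is canonically isomorphic to A ⊗_{ℤ[S]} ℤ[S,S⁻¹], the base change along the commutative localisation of the polynomial ring ℤ[S] at the multiplicative set generated by S; moreover A[S⁻¹] is flat as a left (and right) A-module. -/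
/-!
Because `S` is central, the universal property forces `f` to map central elements of `A` to
central elements of `L`: the centralizer of `f z` is a subring containing `f A` and the
inverses `(f s)⁻¹`, hence all of `L`. So `L` is an `R = ℤ[S]`-algebra, and the universal
properties of `Localization M` and of the tensor product give a map `A ⊗[R] R_M → L` inverse
to the one given by the universal property of `L`.

Base change along `R → R_M` is localisation of modules, so every element of `L` is a fraction
`f a * (f t)⁻¹` and `f a = 0` iff `t * a = 0` for some `t` in the monoid generated by `S`.
Putting the `x i` of a relation `∑ f (a i) * x i = 0` over a common denominator, the relation
factors through the single element `(f (t * u))⁻¹`; symmetrically on the right.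
-/

open TensorProduct

universe u

def RingHom.IsUniversalInverting {A : Type*} {L : Type u} [Ring A] [Ring L] (S : Set A)
    (f : A →+* L) : Prop :=
  (∀ s ∈ S, IsUnit (f s)) ∧
    ∀ (C : Type u) [Ring C] (g : A →+* C), (∀ s ∈ S, IsUnit (g s)) →
      ∃! h : L →+* C, h.comp f = g

namespace RingHom.IsUniversalInverting

variable {A : Type*} {L : Type u} [Ring A] [Ring L] {S : Set A} {f : A →+* L}

theorem hom_ext (hf : f.IsUniversalInverting S) {C : Type u} [Ring C] {h₁ h₂ : L →+* C}
    (h : h₁.comp f = h₂.comp f) : h₁ = h₂ :=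
  (hf.2 C (h₁.comp f) fun s hs => (hf.1 s hs).map h₁).unique rfl h.symm

theorem isUnit_of_mem_closure (hf : f.IsUniversalInverting S) {t : A}
    (ht : t ∈ Submonoid.closure S) : IsUnit (f t) :=
  (Submonoid.closure_le (S := (IsUnit.submonoid L).comap f.toMonoidHom)).2 hf.1 ht

theorem subring_eq_top (hf : f.IsUniversalInverting S) {P : Subring L} (hfP : ∀ a, f a ∈ P)
    (hinvP : ∀ u : Lˣ, (u : L) ∈ f '' S → (↑u⁻¹ : L) ∈ P) : P = ⊤ := by
  let f' : A →+* P := f.codRestrict P hfP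
  have hf' : ∀ s ∈ S, IsUnit (f' s) := fun s hs =>
    ⟨⟨f' s, ⟨_, hinvP (hf.1 s hs).unit ⟨s, hs, rfl⟩⟩, Subtype.ext (hf.1 s hs).mul_val_inv,
      Subtype.ext (hf.1 s hs).val_inv_mul⟩, rfl⟩
  obtain ⟨h, hh, -⟩ := hf.2 P f' hf'
  have hsection : P.subtype.comp h = RingHom.id L :=
    hf.hom_ext (RingHom.ext fun a => congrArg Subtype.val (RingHom.congr_fun hh a))
  refine eq_top_iff.2 fun x _ => ?_
  rw [← RingHom.id_apply x, ← hsection]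
  exact (h x).2

theorem map_mem_center (hf : f.IsUniversalInverting S) {z : A} (hz : z ∈ Set.center A) :
    f z ∈ Set.center L := by
  have hcomm : ∀ a, Commute (f z) (f a) := fun a =>
    Commute.map ((Semigroup.mem_center_iff.1 hz a).symm : Commute z a) f
  have htop : Subring.centralizer {f z} = ⊤ := by
    refine hf.subring_eq_top (fun a => Subring.mem_centralizer_iff.2 ?_) ?_
    · rintro _ rfl
      exact hcomm a
    · rintro u ⟨s, -, hs⟩ _ rfl
      exact (Commute.units_inv_right (hs ▸ hcomm s : Commute (f z) u)).eq
  refine Semigroup.mem_center_iff.2 fun x => ?_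
  have hx : x ∈ Subring.centralizer {f z} := htop ▸ Subring.mem_top x
  exact (Subring.mem_centralizer_iff.1 hx _ rfl).symm

end RingHom.IsUniversalInverting

section

variable {R : Type*} [CommRing R] (M : Submonoid R) {N : Type*} [AddCommGroup N] [Module R N]

theorem TensorProduct.tmul_localization_one_eq_zero_iff (n : N) :
    n ⊗ₜ[R] (1 : Localization M) = 0 ↔ ∃ m : M, m • n = 0 :=
  IsLocalizedModule.eq_zero_iff M (f := (TensorProduct.comm R (Localization M) N).toLinearMap ∘ₗ
    TensorProduct.mk R (Localization M) N 1)

theorem TensorProduct.exists_smul_eq_tmul_localization_one (z : N ⊗[R] Localization M) :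
    ∃ (n : N) (m : M), m • z = n ⊗ₜ 1 := by
  obtain ⟨⟨n, m⟩, h⟩ := IsLocalizedModule.surj M
    ((TensorProduct.comm R (Localization M) N).toLinearMap ∘ₗ
      TensorProduct.mk R (Localization M) N 1) z
  exact ⟨n, m, h⟩

end

namespace Localization

variable {R : Type*} [CommRing R] {M : Submonoid R} {L : Type*} [Ring L]

noncomputable def liftCenter (g : R →+* L) (hg : ∀ r, g r ∈ Set.center L)
    (hM : ∀ m : M, IsUnit (g m)) : Localization M →+* L :=
  (Subring.center L).subtype.comp <| IsLocalization.lift (M := M)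
    (g := g.codRestrict (Subring.center L) hg) fun m => by
      obtain ⟨u, hu⟩ := hM m
      have hu' : (u : L) ∈ Set.center L := hu ▸ hg m
      exact ⟨⟨⟨u, hu'⟩, ⟨_, Set.units_inv_mem_center hu'⟩, Subtype.ext u.mul_inv,
        Subtype.ext u.inv_mul⟩, Subtype.ext hu⟩

theorem liftCenter_algebraMap (g : R →+* L) (hg : ∀ r, g r ∈ Set.center L)
    (hM : ∀ m : M, IsUnit (g m)) (r : R) :
    liftCenter g hg hM (algebraMap R (Localization M) r) = g r := by
  rw [liftCenter, RingHom.comp_apply, IsLocalization.lift_eq]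
  rfl

theorem liftCenter_mem_center (g : R →+* L) (hg : ∀ r, g r ∈ Set.center L)
    (hM : ∀ m : M, IsUnit (g m)) (q : Localization M) : liftCenter g hg hM q ∈ Set.center L :=
  Subtype.prop _

end Localization

namespace RingHom.IsUniversalInverting

variable {R A L : Type u} [CommRing R] [Ring A] [Algebra R A] [Ring L] {M : Submonoid R}
  {S : Set A} {f : A →+* L}

theorem exists_ringEquiv_tensorProduct (hf : f.IsUniversalInverting S)
    (hM : M.map (algebraMap R A) = Submonoid.closure S) :
    ∃ e : L ≃+* A ⊗[R] Localization M,
      e.toRingHom.comp f = Algebra.TensorProduct.includeLeftRingHom := by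
  have hcen : ∀ r, f (algebraMap R A r) ∈ Set.center L := fun r =>
    hf.map_mem_center (Set.algebraMap_mem_center r)
  let _ : Algebra R L := (f.comp (algebraMap R A)).toAlgebra' fun r x =>
    (Semigroup.mem_center_iff.1 (hcen r) x).symm
  have hunit : ∀ m : M, IsUnit (f (algebraMap R A m)) := fun m =>
    hf.isUnit_of_mem_closure (hM ▸ Submonoid.mem_map_of_mem _ m.2)
  let ψ : Localization M →ₐ[R] L :=
    { Localization.liftCenter (f.comp (algebraMap R A)) hcen hunit with
      commutes' := Localization.liftCenter_algebraMap _ hcen hunit }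
  let k : A ⊗[R] Localization M →ₐ[R] L :=
    Algebra.TensorProduct.lift { f with commutes' := fun _ => rfl } ψ fun a q =>
      Semigroup.mem_center_iff.1 (Localization.liftCenter_mem_center _ hcen hunit q) (f a)
  have hS : ∀ s ∈ S,
      IsUnit (Algebra.TensorProduct.includeLeftRingHom s : A ⊗[R] Localization M) := by
    intro s hs
    obtain ⟨m, hm, rfl⟩ : s ∈ M.map (algebraMap R A) := hM ▸ Submonoid.subset_closure hs
    have := (IsLocalization.map_units (Localization M) ⟨m, hm⟩).map
      (Algebra.TensorProduct.includeRight : Localization M →ₐ[R] A ⊗[R] Localization M)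
    simpa using this
  have hk : ∀ a q, k (a ⊗ₜ q) = f a * ψ q := Algebra.TensorProduct.lift_tmul _ _ _
  have hkf : ∀ a, k (a ⊗ₜ 1) = f a := by simp [hk]
  obtain ⟨h, hh, -⟩ := hf.2 _ Algebra.TensorProduct.includeLeftRingHom hS
  have hhf : ∀ a, h (f a) = a ⊗ₜ 1 := RingHom.congr_fun hh
  refine ⟨RingEquiv.ofRingHom h k.toRingHom ?_ ?_, hh⟩
  · apply Algebra.TensorProduct.ringHom_ext
    · ext a
      simp [hkf, hhf]
    · apply IsLocalization.ringHom_ext M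
      ext r
      simp [hk, ψ, hhf]
  · apply hf.hom_ext
    ext a
    simp [hkf, hhf]

end RingHom.IsUniversalInverting

section BaseChange

variable {R A L : Type*} [CommRing R] [Ring A] [Algebra R A] [Ring L] {M : Submonoid R}
  {f : A →+* L}

theorem RingHom.exists_mul_eq_zero_of_ringEquiv_tensorProduct (e : L ≃+* A ⊗[R] Localization M)
    (he : e.toRingHom.comp f = Algebra.TensorProduct.includeLeftRingHom) {a : A} (ha : f a = 0) :
    ∃ t ∈ M.map (algebraMap R A), t * a = 0 := by
  have h : a ⊗ₜ[R] (1 : Localization M) = 0 := by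
    rw [← map_zero e, ← ha]
    exact (RingHom.congr_fun he a).symm
  obtain ⟨m, hm⟩ := (TensorProduct.tmul_localization_one_eq_zero_iff M a).1 h
  exact ⟨_, Submonoid.mem_map_of_mem _ m.2, by rwa [← Algebra.smul_def]⟩

theorem RingHom.exists_mul_eq_map_of_ringEquiv_tensorProduct (e : L ≃+* A ⊗[R] Localization M)
    (he : e.toRingHom.comp f = Algebra.TensorProduct.includeLeftRingHom) (x : L) :
    ∃ a, ∃ t ∈ M.map (algebraMap R A), x * f t = f a := by
  obtain ⟨a, m, hm⟩ := TensorProduct.exists_smul_eq_tmul_localization_one M (e x)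
  refine ⟨a, _, Submonoid.mem_map_of_mem _ m.2, e.injective ?_⟩
  have hef : ∀ b, e (f b) = b ⊗ₜ 1 := RingHom.congr_fun he
  rw [map_mul, hef, hef, ← hm, ← Algebra.TensorProduct.algebraMap_apply, ← Algebra.commutes,
    ← Algebra.smul_def]
  rfl

end BaseChange

section Factorization

variable {A L : Type*} [Ring A] [Ring L] {f : A →+* L} {P : Submonoid A}

theorem RingHom.exists_common_denominator (hP : P ≤ Submonoid.center A)
    (hfrac : ∀ x : L, ∃ a, ∃ t ∈ P, x * f t = f a) {ι : Type*} (s : Finset ι) (x : ι → L) :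
    ∃ t ∈ P, ∀ i ∈ s, ∃ b, x i * f t = f b := by
  classical
  induction s using Finset.induction_on with
  | empty => exact ⟨1, P.one_mem, by simp⟩
  | insert i s _ ih =>
    obtain ⟨t, ht, hs⟩ := ih
    obtain ⟨a, u, hu, hxu⟩ := hfrac (x i)
    refine ⟨t * u, mul_mem ht hu, fun j hj => ?_⟩
    rcases Finset.mem_insert.1 hj with rfl | hj
    · exact ⟨a * t, by rw [Submonoid.mem_center_iff.1 (hP hu) t, map_mul, ← mul_assoc, hxu, map_mul]⟩
    · obtain ⟨b, hb⟩ := hs j hj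
      exact ⟨b * u, by rw [map_mul, ← mul_assoc, hb, map_mul]⟩

theorem RingHom.exists_factorization_of_sum_map_mul_eq_zero (hP : P ≤ Submonoid.center A)
    (hunit : ∀ t ∈ P, IsUnit (f t)) (hfrac : ∀ x : L, ∃ a, ∃ t ∈ P, x * f t = f a)
    (hker : ∀ a, f a = 0 → ∃ t ∈ P, t * a = 0) {ι : Type*} [Fintype ι] (a : ι → A)
    (x : ι → L) (hx : ∑ i, f (a i) * x i = 0) :
    ∃ (y : L) (c : ι → A), (∀ i, x i = f (c i) * y) ∧ ∑ i, a i * c i = 0 := by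
  obtain ⟨t, ht, hb⟩ := exists_common_denominator hP hfrac Finset.univ x
  choose b hb using fun i => hb i (Finset.mem_univ i)
  obtain ⟨u, hu, hub⟩ := hker (∑ i, a i * b i) (by
    simp only [map_sum, map_mul, ← hb, ← mul_assoc, ← Finset.sum_mul, hx, zero_mul])
  refine ⟨Ring.inverse (f (t * u)), fun i => b i * u, fun i => ?_, ?_⟩
  · calc x i = x i * f (t * u) * Ring.inverse (f (t * u)) :=
          (Ring.mul_inverse_cancel_right _ _ (hunit _ (mul_mem ht hu))).symm
      _ = f (b i * u) * Ring.inverse (f (t * u)) := by rw [map_mul, map_mul, ← mul_assoc, hb]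
  · calc ∑ i, a i * (b i * u) = (∑ i, a i * b i) * u := by
          simp only [Finset.sum_mul, mul_assoc]
      _ = u * ∑ i, a i * b i := Submonoid.mem_center_iff.1 (hP hu) _
      _ = 0 := hub

theorem RingHom.exists_factorization_of_sum_mul_map_eq_zero (hP : P ≤ Submonoid.center A)
    (hcen : ∀ t ∈ P, f t ∈ Set.center L)
    (hunit : ∀ t ∈ P, IsUnit (f t)) (hfrac : ∀ x : L, ∃ a, ∃ t ∈ P, x * f t = f a)
    (hker : ∀ a, f a = 0 → ∃ t ∈ P, t * a = 0) {ι : Type*} [Fintype ι] (a : ι → A)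
    (x : ι → L) (hx : ∑ i, x i * f (a i) = 0) :
    ∃ (y : L) (c : ι → A), (∀ i, x i = y * f (c i)) ∧ ∑ i, c i * a i = 0 := by
  obtain ⟨t, ht, hb⟩ := exists_common_denominator hP hfrac Finset.univ x
  choose b hb using fun i => hb i (Finset.mem_univ i)
  have hb' : ∀ i, f (b i) = f t * x i := fun i =>
    (hb i).symm.trans (Semigroup.mem_center_iff.1 (hcen t ht) (x i))
  obtain ⟨u, hu, hub⟩ := hker (∑ i, b i * a i) (by
    simp only [map_sum, map_mul, hb', mul_assoc, ← Finset.mul_sum, hx, mul_zero])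
  refine ⟨Ring.inverse (f (u * t)), fun i => u * b i, fun i => ?_, ?_⟩
  · calc x i = Ring.inverse (f (u * t)) * (f (u * t) * x i) :=
          (Ring.inverse_mul_cancel_left _ _ (hunit _ (mul_mem hu ht))).symm
      _ = Ring.inverse (f (u * t)) * f (u * b i) := by
          rw [map_mul f u (b i), hb', map_mul, mul_assoc]
  · simp only [mul_assoc, ← Finset.mul_sum, hub]

end Factorization

theorem statement9 (A : Type) [Ring A] (S : Set A)
    -- S is central in A:
    (hc : ∀ s ∈ S, ∀ a : A, s * a = a * s)
    -- A is an algebra over the polynomial ring ℤ[S], each variable mapping to the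
    -- corresponding element of S:
    [Algebra (MvPolynomial ↥S ℤ) A]
    (halg : ∀ s : ↥S, algebraMap (MvPolynomial ↥S ℤ) A (MvPolynomial.X s) = (s : A))
    -- f : A → L is the universal S-inverting ring homomorphism:
    (L : Type) [Ring L] (f : A →+* L)
    (hinv : ∀ s ∈ S, IsUnit (f s))
    (huniv : ∀ (C : Type) [Ring C] (g : A →+* C), (∀ s ∈ S, IsUnit (g s)) →
        ∃! h : L →+* C, h.comp f = g) :
    -- L = A[S⁻¹] is canonically isomorphic to A ⊗_{ℤ[S]} ℤ[S,S⁻¹]: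
    (∃ e : L ≃+* (TensorProduct (MvPolynomial ↥S ℤ) A
        (Localization (Submonoid.closure
          (Set.range (MvPolynomial.X : ↥S → MvPolynomial ↥S ℤ))))),
        e.toRingHom.comp f =
          (Algebra.TensorProduct.includeLeftRingHom :
            A →+* (TensorProduct (MvPolynomial ↥S ℤ) A
              (Localization (Submonoid.closure
                (Set.range (MvPolynomial.X : ↥S → MvPolynomial ↥S ℤ))))))) ∧
    -- L = A[S⁻¹] is flat as a left A-module (equational criterion):
    (∀ (n : ℕ) (a : Fin n → A) (x : Fin n → L),
        (∑ i, f (a i) * x i) = 0 →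
          ∃ (m : ℕ) (y : Fin m → L) (c : Fin n → Fin m → A),
            (∀ i, x i = ∑ j, f (c i j) * y j) ∧ ∀ j, (∑ i, a i * c i j) = 0) ∧
    -- and flat as a right A-module (equational criterion):
    (∀ (n : ℕ) (a : Fin n → A) (x : Fin n → L),
        (∑ i, x i * f (a i)) = 0 →
          ∃ (m : ℕ) (y : Fin m → L) (c : Fin m → Fin n → A),
            (∀ i, x i = ∑ j, y j * f (c j i)) ∧ ∀ j, (∑ i, c j i * a i) = 0) := by
  have hf : f.IsUniversalInverting S := ⟨hinv, huniv⟩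
  have hS : Submonoid.closure S ≤ Submonoid.center A :=
    Submonoid.closure_le.2 fun s hs => Semigroup.mem_center_iff.2 fun a => (hc s hs a).symm
  have hM : (Submonoid.closure (Set.range (MvPolynomial.X : ↥S → MvPolynomial ↥S ℤ))).map
      (algebraMap _ A) = Submonoid.closure S := by
    rw [MonoidHom.map_mclosure, ← Set.range_comp,
      show algebraMap _ A ∘ MvPolynomial.X = ((↑) : S → A) from funext halg, Subtype.range_coe]
  obtain ⟨e, he⟩ := hf.exists_ringEquiv_tensorProduct hM
  have hunit : ∀ t ∈ Submonoid.closure S, IsUnit (f t) := fun t => hf.isUnit_of_mem_closure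
  have hfrac : ∀ x : L, ∃ a, ∃ t ∈ Submonoid.closure S, x * f t = f a :=
    hM ▸ f.exists_mul_eq_map_of_ringEquiv_tensorProduct e he
  have hker : ∀ a, f a = 0 → ∃ t ∈ Submonoid.closure S, t * a = 0 := fun a =>
    hM ▸ f.exists_mul_eq_zero_of_ringEquiv_tensorProduct e he
  refine ⟨⟨e, he⟩, fun n a x hx => ?_, fun n a x hx => ?_⟩
  · obtain ⟨y, c, hxy, hc⟩ :=
      f.exists_factorization_of_sum_map_mul_eq_zero hS hunit hfrac hker a x hx
    exact ⟨1, fun _ => y, fun i _ => c i, by simpa using hxy, fun _ => hc⟩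
  · obtain ⟨y, c, hxy, hc⟩ := f.exists_factorization_of_sum_mul_map_eq_zero hS
      (fun t ht => hf.map_mem_center (hS ht)) hunit hfrac hker a x hx
    exact ⟨1, fun _ => y, fun _ i => c i, by simpa using hxy, fun _ => hc⟩
end

section
/- Let k be a commutative ring, T a set, and S ⊆ T. Then the universal S-inverting algebra k⟨T⟩[S⁻¹] ≅ k⟨T, S⁻¹⟩ of the free algebra k⟨T⟩ admits a free resolution of length two as a left k⟨T⟩-module: there is a short exact sequence 0 → k⟨T⟩ ⊗ ⟨T⟩ ⊗ k⟨T⟩[S⁻¹] → k⟨T⟩ ⊗ k⟨T⟩[S⁻¹] → k⟨T⟩[S⁻¹] → 0 of left k⟨T⟩-modules, where ⟨T⟩ is the free k-module on T, the second map is induced by multiplication, and the first sends t ∈ T to t ⊗ 1 − 1 ⊗ t. In particular Tor_i^{k⟨T⟩}(M, k⟨T⟩[S⁻¹]) = 0 for all i ≥ 2 and all right k⟨T⟩-modules M. -/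
/-!
The two maps make sense for any algebra map `f : k⟨T⟩ → L`, and the sequence is then split
exact over `k`. A contracting homotopy is `b ⊗ l ↦ D b l`, where the `f`-twisted Fox derivative
`D : k⟨T⟩ → Hom_k(L, k⟨T⟩ ⊗ ⟨T⟩ ⊗ L)` is determined by `D t l = 1 ⊗ t ⊗ l` and the Leibniz rule
`D (a b) l = a • D b l + D a (f b * l)`. Such a `D` exists because `b ↦ [[b, D b], [0, f b]]` is
an algebra map out of the free algebra into the endomorphisms of `(k⟨T⟩ ⊗ ⟨T⟩ ⊗ L) × L`.

Both terms are free over `k⟨T⟩` as soon as `L` is free over `k`, and by its universal property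
`L` is the monoid algebra of the monoid presented by generators `T ⊔ S⁻¹` and relations
`s s⁻¹ = s⁻¹ s = 1`.
-/

open TensorProduct

theorem exact_of_contractingHomotopy {R M₁ M₂ M₃ : Type*} [Ring R] [AddCommGroup M₁]
    [AddCommGroup M₂] [AddCommGroup M₃] [Module R M₁] [Module R M₂] [Module R M₃]
    (d₁ : M₁ →ₗ[R] M₂) (d₀ : M₂ →ₗ[R] M₃) (h : M₂ →+ M₁) (s : M₃ →+ M₂)
    (h_d₁ : ∀ x, h (d₁ x) = x) (d₁_h : ∀ y, d₁ (h y) = y - s (d₀ y))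
    (d₀_s : ∀ z, d₀ (s z) = z) :
    Function.Injective d₁ ∧ LinearMap.range d₁ = LinearMap.ker d₀ ∧ Function.Surjective d₀ := by
  refine ⟨Function.LeftInverse.injective h_d₁, le_antisymm ?_ fun y hy => ⟨h y, ?_⟩,
    Function.RightInverse.surjective d₀_s⟩
  · rintro _ ⟨x, rfl⟩
    have : s (d₀ (d₁ x)) = 0 := sub_eq_self.1 (by rw [← d₁_h, h_d₁])
    rw [LinearMap.mem_ker, ← d₀_s (d₀ (d₁ x)), this, map_zero]
  · rw [d₁_h, LinearMap.mem_ker.1 hy, map_zero, sub_zero]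

theorem isScalarTower_of_smul_eq_mul {k A L : Type*} [CommSemiring k] [Semiring A] [Semiring L]
    [Algebra k A] [Algebra k L] (f : A →ₐ[k] L) [Module A L]
    (hsmul : ∀ (a : A) (l : L), a • l = f a * l) : IsScalarTower k A L :=
  ⟨fun c a l => by rw [hsmul, hsmul, map_smul, smul_mul_assoc]⟩

namespace TensorProduct.AlgebraTensorModule

variable {k : Type*} [CommSemiring k] (A : Type*) [Semiring A] [Algebra k A] {N P : Type*}
  [AddCommMonoid N] [Module k N] [AddCommMonoid P] [Module k P] [Module A P]
  [IsScalarTower k A P]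

/-- `LinearMap.liftBaseChange` for a not necessarily commutative `A`. -/
noncomputable def liftBaseChange (g : N →ₗ[k] P) : A ⊗[k] N →ₗ[A] P :=
  lift (LinearMap.toSpanSingleton A _ g)

@[simp]
lemma liftBaseChange_tmul (g : N →ₗ[k] P) (a : A) (n : N) :
    liftBaseChange A g (a ⊗ₜ n) = a • g n :=
  rfl

end TensorProduct.AlgebraTensorModule

namespace FreeAlgebra

section InvertingMonoid

variable {k : Type} [CommRing k] {T : Type} (S : Set T)

def invertingRels : FreeMonoid (T ⊕ S) → FreeMonoid (T ⊕ S) → Prop :=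
  fun a b => b = 1 ∧ ∃ s : S,
    a = .of (.inl s.1) * .of (.inr s) ∨ a = .of (.inr s) * .of (.inl s.1)

abbrev InvertingMonoid := PresentedMonoid (invertingRels S)

variable (k) in
noncomputable def toInvertingMonoidAlgebra :
    FreeAlgebra k T →ₐ[k] MonoidAlgebra k (InvertingMonoid S) :=
  lift k fun t => MonoidAlgebra.of k _ (.of _ (.inl t))

variable {S}

lemma of_mul_of_inv (s : S) :
    PresentedMonoid.of (invertingRels S) (.inl s.1) * .of _ (.inr s) = 1 :=
  PresentedMonoid.mk_eq_mk_of_rel ⟨rfl, s, .inl rfl⟩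

lemma of_inv_mul_of (s : S) :
    PresentedMonoid.of (invertingRels S) (.inr s) * .of _ (.inl s.1) = 1 :=
  PresentedMonoid.mk_eq_mk_of_rel ⟨rfl, s, .inr rfl⟩

lemma isUnit_toInvertingMonoidAlgebra_ι (s : T) (hs : s ∈ S) :
    IsUnit (toInvertingMonoidAlgebra k S (ι k s)) := by
  rw [toInvertingMonoidAlgebra, lift_ι_apply]
  exact (isUnit_iff_exists.2 ⟨_, of_mul_of_inv ⟨s, hs⟩, of_inv_mul_of ⟨s, hs⟩⟩).map _

variable {C : Type} [Ring C] [Algebra k C]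

lemma exists_comp_toInvertingMonoidAlgebra (g : FreeAlgebra k T →ₐ[k] C)
    (hg : ∀ s ∈ S, IsUnit (g (ι k s))) :
    ∃ h : MonoidAlgebra k (InvertingMonoid S) →ₐ[k] C,
      h.comp (toInvertingMonoidAlgebra k S) = g := by
  let φ : T ⊕ S → C := Sum.elim (fun t => g (ι k t)) fun s => ↑(hg s s.2).unit⁻¹
  have hφ : ∀ a b, invertingRels S a b → FreeMonoid.lift φ a = FreeMonoid.lift φ b := by
    rintro a b ⟨rfl, s, rfl | rfl⟩ <;> simp [φ]
  refine ⟨MonoidAlgebra.lift k C _ (PresentedMonoid.lift φ hφ), hom_ext ?_⟩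
  funext t
  simp [toInvertingMonoidAlgebra, φ]

lemma algHom_ext_toInvertingMonoidAlgebra
    {h₁ h₂ : MonoidAlgebra k (InvertingMonoid S) →ₐ[k] C}
    (H : h₁.comp (toInvertingMonoidAlgebra k S) = h₂.comp (toInvertingMonoidAlgebra k S)) :
    h₁ = h₂ := by
  have hinl (t : T) : h₁ (MonoidAlgebra.of k _ (.of _ (.inl t))) =
      h₂ (MonoidAlgebra.of k _ (.of _ (.inl t))) := by
    simpa [toInvertingMonoidAlgebra] using DFunLike.congr_fun H (ι k t)
  refine (MonoidAlgebra.lift k C _).symm.injective (PresentedMonoid.ext _ ?_)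
  rintro (t | s)
  · exact hinl t
  · show h₁ (MonoidAlgebra.of k _ (.of _ (.inr s))) = h₂ (MonoidAlgebra.of k _ (.of _ (.inr s)))
    refine left_inv_eq_right_inv (a := h₁ (MonoidAlgebra.of k _ (.of _ (.inl s.1)))) ?_ ?_
    · rw [← map_mul, ← map_mul, of_inv_mul_of, map_one, map_one]
    · rw [hinl, ← map_mul, ← map_mul, of_mul_of_inv, map_one, map_one]

theorem module_free_of_universal_inverting {L : Type} [Ring L] [Algebra k L]
    (f : FreeAlgebra k T →ₐ[k] L) (hinv : ∀ s ∈ S, IsUnit (f (ι k s)))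
    (huniv : ∀ (C : Type) [Ring C] [Algebra k C] (g : FreeAlgebra k T →ₐ[k] C),
        (∀ s ∈ S, IsUnit (g (ι k s))) → ∃! h : L →ₐ[k] C, h.comp f = g) :
    Module.Free k L := by
  obtain ⟨α, hα, -⟩ := huniv _ (toInvertingMonoidAlgebra k S) isUnit_toInvertingMonoidAlgebra_ι
  obtain ⟨β, hβ⟩ := exists_comp_toInvertingMonoidAlgebra f hinv
  have hβα : β.comp α = AlgHom.id k L :=
    (huniv L f hinv).unique (by rw [AlgHom.comp_assoc, hα, hβ]) (AlgHom.id_comp f)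
  have hαβ : α.comp β = AlgHom.id k _ :=
    algHom_ext_toInvertingMonoidAlgebra (by rw [AlgHom.comp_assoc, hβ, hα, AlgHom.id_comp])
  exact Module.Free.of_equiv (AlgEquiv.ofAlgHom β α hβα hαβ).toLinearEquiv

end InvertingMonoid

section Resolution

variable {k T L : Type*} [CommRing k] [Ring L] [Algebra k L] (f : FreeAlgebra k T →ₐ[k] L)

local notation "X" => FreeAlgebra k T ⊗[k] ((T →₀ k) ⊗[k] L)

variable (k L) in
noncomputable def oneTmulSingle (t : T) : L →ₗ[k] X :=
  TensorProduct.mk k (FreeAlgebra k T) _ 1 ∘ₗ TensorProduct.mk k (T →₀ k) L (.single t 1)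

noncomputable def triangularRep : FreeAlgebra k T →ₐ[k] Module.End k (X × L) :=
  lift k fun t =>
    (ι k t • LinearMap.fst k X L + oneTmulSingle k L t ∘ₗ LinearMap.snd k X L).prod
      (LinearMap.mulLeft k (f (ι k t)) ∘ₗ LinearMap.snd k X L)

lemma triangularRep_inl (b : FreeAlgebra k T) (x : X) :
    triangularRep f b (x, 0) = (b • x, 0) := by
  induction b using FreeAlgebra.induction generalizing x with
  | grade0 c => simp [Algebra.algebraMap_eq_smul_one, smul_assoc]
  | grade1 t => simp [triangularRep]
  | mul a b ha hb => rw [map_mul, Module.End.mul_apply, hb, ha, mul_smul]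
  | add a b ha hb =>
    rw [map_add, LinearMap.add_apply, ha, hb, add_smul, Prod.mk_add_mk, add_zero]

lemma snd_triangularRep (b : FreeAlgebra k T) (p : X × L) :
    (triangularRep f b p).2 = f b * p.2 := by
  induction b using FreeAlgebra.induction generalizing p with
  | grade0 c => simp [Algebra.smul_def]
  | grade1 t => simp [triangularRep]
  | mul a b ha hb => rw [map_mul, Module.End.mul_apply, ha, hb, map_mul, mul_assoc]
  | add a b ha hb => rw [map_add, LinearMap.add_apply, Prod.snd_add, ha, hb, map_add, add_mul]

noncomputable def foxDeriv : FreeAlgebra k T →ₗ[k] L →ₗ[k] X :=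
  ((triangularRep f).toLinearMap.compl₂ (LinearMap.inr k X L)).compr₂ (LinearMap.fst k X L)

lemma triangularRep_inr (b : FreeAlgebra k T) (l : L) :
    triangularRep f b (0, l) = (foxDeriv f b l, f b * l) :=
  Prod.ext rfl (by rw [snd_triangularRep])

lemma foxDeriv_mul (a b : FreeAlgebra k T) (l : L) :
    foxDeriv f (a * b) l = a • foxDeriv f b l + foxDeriv f a (f b * l) := by
  have h := congrArg Prod.fst (congrArg (triangularRep f a) (triangularRep_inr f b l))
  rw [← Module.End.mul_apply, ← map_mul, triangularRep_inr, ← add_zero (foxDeriv f b l),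
    ← zero_add (f b * l), ← Prod.mk_add_mk, map_add, triangularRep_inl, triangularRep_inr] at h
  simpa using h

lemma foxDeriv_ι (t : T) (l : L) : foxDeriv f (ι k t) l = 1 ⊗ₜ (.single t 1 ⊗ₜ l) := by
  simp [foxDeriv, triangularRep, oneTmulSingle]

lemma foxDeriv_algebraMap (c : k) : foxDeriv f (algebraMap k (FreeAlgebra k T) c) = 0 := by
  ext l
  simp [foxDeriv, Algebra.algebraMap_eq_smul_one]

noncomputable def commutatorTmul (t : T) : L →ₗ[k] FreeAlgebra k T ⊗[k] L :=
  TensorProduct.mk k _ L (ι k t) - TensorProduct.mk k _ L 1 ∘ₗ LinearMap.mulLeft k (f (ι k t))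

noncomputable def resolutionDiff : X →ₗ[FreeAlgebra k T] FreeAlgebra k T ⊗[k] L :=
  AlgebraTensorModule.liftBaseChange _
    (TensorProduct.lift (Finsupp.linearCombination k (commutatorTmul f)))

lemma resolutionDiff_tmul_single (b : FreeAlgebra k T) (t : T) (l : L) :
    resolutionDiff f (b ⊗ₜ (.single t 1 ⊗ₜ l)) =
      (b * ι k t) ⊗ₜ l - b ⊗ₜ (f (ι k t) * l) := by
  simp [resolutionDiff, commutatorTmul, smul_sub, smul_tmul']

noncomputable def contractingHomotopy : FreeAlgebra k T ⊗[k] L →ₗ[k] X :=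
  TensorProduct.lift (foxDeriv f)

lemma contractingHomotopy_resolutionDiff (x : X) :
    contractingHomotopy f (resolutionDiff f x) = x := by
  suffices contractingHomotopy f ∘ₗ (resolutionDiff f).restrictScalars k = LinearMap.id from
    DFunLike.congr_fun this x
  ext b t l
  simp [resolutionDiff_tmul_single, contractingHomotopy, foxDeriv_mul, foxDeriv_ι, smul_tmul']

noncomputable def mulMap : FreeAlgebra k T ⊗[k] L →ₗ[k] L :=
  TensorProduct.lift ((LinearMap.mul k L).comp f.toLinearMap)

lemma resolutionDiff_foxDeriv (b : FreeAlgebra k T) (l : L) :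
    resolutionDiff f (foxDeriv f b l) = b ⊗ₜ l - 1 ⊗ₜ (f b * l) := by
  induction b using FreeAlgebra.induction generalizing l with
  | grade0 c =>
    rw [foxDeriv_algebraMap, LinearMap.zero_apply, map_zero, AlgHom.commutes,
      Algebra.algebraMap_eq_smul_one, smul_tmul, ← Algebra.smul_def, sub_self]
  | grade1 t => simp [foxDeriv_ι, resolutionDiff_tmul_single]
  | mul a b ha hb => simp [foxDeriv_mul, ha, hb, smul_sub, smul_tmul', mul_assoc]
  | add a b ha hb =>
    rw [map_add, LinearMap.add_apply, map_add, ha, hb, map_add, add_mul, add_tmul, tmul_add]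
    abel

lemma resolutionDiff_contractingHomotopy (y : FreeAlgebra k T ⊗[k] L) :
    resolutionDiff f (contractingHomotopy f y) = y - 1 ⊗ₜ mulMap f y := by
  suffices (resolutionDiff f).restrictScalars k ∘ₗ contractingHomotopy f =
      LinearMap.id - TensorProduct.mk k _ L 1 ∘ₗ mulMap f from DFunLike.congr_fun this y
  ext b l
  simp [contractingHomotopy, mulMap, resolutionDiff_foxDeriv]

theorem exact_resolutionDiff [Module (FreeAlgebra k T) L]
    (d₀ : FreeAlgebra k T ⊗[k] L →ₗ[FreeAlgebra k T] L)
    (d₀_tmul : ∀ b l, d₀ (b ⊗ₜ l) = f b * l) :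
    Function.Injective (resolutionDiff f) ∧ LinearMap.range (resolutionDiff f) = LinearMap.ker d₀ ∧
      Function.Surjective d₀ := by
  have d₀_eq_mulMap (y : FreeAlgebra k T ⊗[k] L) : d₀ y = mulMap f y := by
    induction y using TensorProduct.induction_on with
    | zero => simp
    | tmul b l => simp [d₀_tmul, mulMap]
    | add y z hy hz => rw [map_add, map_add, hy, hz]
  refine exact_of_contractingHomotopy _ _ (contractingHomotopy f).toAddMonoidHom
    (TensorProduct.mk k _ L 1).toAddMonoidHom (contractingHomotopy_resolutionDiff f)
    (fun y => ?_) (fun l => by simp [d₀_tmul])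
  simpa [d₀_eq_mulMap] using resolutionDiff_contractingHomotopy f y

end Resolution

end FreeAlgebra

theorem statement10 (k : Type) [CommRing k] (T : Type) (S : Set T)
    (L : Type) [Ring L] [Algebra k L]
    -- f : k⟨T⟩ → L is the universal S-inverting k-algebra homomorphism:
    (f : FreeAlgebra k T →ₐ[k] L)
    (hinv : ∀ s ∈ S, IsUnit (f (FreeAlgebra.ι k s)))
    (huniv : ∀ (C : Type) [Ring C] [Algebra k C] (g : FreeAlgebra k T →ₐ[k] C),
        (∀ s ∈ S, IsUnit (g (FreeAlgebra.ι k s))) → ∃! h : L →ₐ[k] C, h.comp f = g)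
    -- L is a left k⟨T⟩-module via f:
    [Module (FreeAlgebra k T) L]
    (hsmul : ∀ (b : FreeAlgebra k T) (l : L), b • l = f b * l) :
    ∃ (d1 : (FreeAlgebra k T ⊗[k] ((T →₀ k) ⊗[k] L)) →ₗ[FreeAlgebra k T]
              (FreeAlgebra k T ⊗[k] L))
      (d0 : (FreeAlgebra k T ⊗[k] L) →ₗ[FreeAlgebra k T] L),
      -- the maps of the resolution:
      (∀ (b : FreeAlgebra k T) (t : T) (l : L),
          d1 (b ⊗ₜ (Finsupp.single t 1 ⊗ₜ l)) =
            (b * FreeAlgebra.ι k t) ⊗ₜ l - b ⊗ₜ (f (FreeAlgebra.ι k t) * l)) ∧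
      (∀ (b : FreeAlgebra k T) (l : L), d0 (b ⊗ₜ l) = f b * l) ∧
      -- the sequence 0 → B ⊗ ⟨T⟩ ⊗ L → B ⊗ L → L → 0 is exact:
      Function.Injective d1 ∧
      LinearMap.range d1 = LinearMap.ker d0 ∧
      Function.Surjective d0 ∧
      -- and the first two terms are free left B-modules:
      Module.Free (FreeAlgebra k T) (FreeAlgebra k T ⊗[k] ((T →₀ k) ⊗[k] L)) ∧
      Module.Free (FreeAlgebra k T) (FreeAlgebra k T ⊗[k] L) := by
  have := isScalarTower_of_smul_eq_mul f hsmul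
  have : Module.Free k L := FreeAlgebra.module_free_of_universal_inverting f hinv huniv
  let d₀ := AlgebraTensorModule.liftBaseChange (FreeAlgebra k T) (LinearMap.id : L →ₗ[k] L)
  have d₀_tmul (b : FreeAlgebra k T) (l : L) : d₀ (b ⊗ₜ l) = f b * l := hsmul b l
  obtain ⟨injective, exact, surjective⟩ := FreeAlgebra.exact_resolutionDiff f d₀ d₀_tmul
  exact ⟨FreeAlgebra.resolutionDiff f, d₀, FreeAlgebra.resolutionDiff_tmul_single f, d₀_tmul,
    injective, exact, surjective, inferInstance, inferInstance⟩
end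

section
/- Let A be a ring, S ⊆ A, and suppose the multiplication map A[S⁻¹] ⊗_A A[S⁻¹] → A[S⁻¹] is an isomorphism and Tor_i^A(A[S⁻¹], A[S⁻¹]) = 0 for i ≥ 1 (A → A[S⁻¹] is a homological epimorphism). Then restriction of scalars along A → A[S⁻¹] identifies the category of A[S⁻¹]-modules with the full subcategory of A-modules that are strictly S-local, and extension of scalars M ↦ A[S⁻¹] ⊗_A M is left adjoint to this inclusion. -/
/-!
STATEMENT 13: let `A` be a ring, `S ⊆ A`, and suppose the universal localisation
map `f : A → L = A[S⁻¹]` is a homological epimorphism (the multiplication map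
`L ⊗_A L → L` is an isomorphism and `Tor_i^A(L,L) = 0` for `i ≥ 1`).  Then
restriction of scalars along `f` identifies `L`-modules with the strictly `S`-local
`A`-modules, and extension of scalars `M ↦ L ⊗_A M` is left adjoint to this
inclusion: (a) every `L`-module is strictly `S`-local over `A`; (b) every strictly
`S`-local `A`-module carries a unique compatible `L`-module structure; (c) for
strictly `S`-local `N`, `Hom_A(L ⊗_A M, N) ≅ Hom_A(M, N)`.
-/

/-- Relations for the balanced tensor product `L ⊗_A N`, where `L` is a right
`A`-module via the ring map `f : A → L` and `N` is a left `A`-module. -/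
def tensRel (A : Type) [Ring A] (L : Type) [Ring L] (f : A →+* L)
    (N : Type) [AddCommGroup N] [Module A N] :
    AddSubgroup (FreeAbelianGroup (L × N)) :=
  AddSubgroup.closure
    { z | (∃ x x' n, z = FreeAbelianGroup.of (x + x', n) -
            FreeAbelianGroup.of (x, n) - FreeAbelianGroup.of (x', n)) ∨
          (∃ x n n', z = FreeAbelianGroup.of (x, n + n') -
            FreeAbelianGroup.of (x, n) - FreeAbelianGroup.of (x, n')) ∨
          (∃ x a n, z = FreeAbelianGroup.of (x * f a, n) -
            FreeAbelianGroup.of (x, a • n)) }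

/-- The balanced tensor product `L ⊗_A N`. -/
abbrev TProd (A : Type) [Ring A] (L : Type) [Ring L] (f : A →+* L)
    (N : Type) [AddCommGroup N] [Module A N] : Type :=
  FreeAbelianGroup (L × N) ⧸ tensRel A L f N

/-- The pure tensor `x ⊗ n` in `L ⊗_A N`. -/
def tmk (A : Type) [Ring A] (L : Type) [Ring L] (f : A →+* L)
    (N : Type) [AddCommGroup N] [Module A N] (x : L) (n : N) : TProd A L f N :=
  QuotientAddGroup.mk (FreeAbelianGroup.of (x, n))


/-- The universal `S`-inverting map is a ring epimorphism. -/
lemma epi_of_univ {A : Type} [Ring A] {S : Set A} {L : Type} [Ring L] (f : A →+* L)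
    (hinv : ∀ s ∈ S, IsUnit (f s))
    (huniv : ∀ (C : Type) [Ring C] (g : A →+* C), (∀ s ∈ S, IsUnit (g s)) →
        ∃! h : L →+* C, h.comp f = g) :
    ∀ (C : Type) [Ring C] (g₁ g₂ : L →+* C), g₁.comp f = g₂.comp f → g₁ = g₂ := by
  intro C _ g₁ g₂ hc
  have hg : ∀ s ∈ S, IsUnit ((g₁.comp f) s) := fun s hs => (hinv s hs).map g₁
  obtain ⟨h, -, hu⟩ := huniv C (g₁.comp f) hg
  rw [hu g₁ rfl, hu g₂ hc.symm]

/-- An `A`-linear additive map between `L`-modules is `L`-linear when `f : A → L`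
is a ring epimorphism. -/
lemma Llinear_of_Alinear {A : Type} [Ring A] {L : Type} [Ring L] (f : A →+* L)
    (hepi : ∀ (C : Type) [Ring C] (g₁ g₂ : L →+* C), g₁.comp f = g₂.comp f → g₁ = g₂)
    (P Q : Type) [AddCommGroup P] [AddCommGroup Q] [Module L P] [Module L Q]
    (h : P →+ Q) (hA : ∀ (a : A) (p : P), h (f a • p) = f a • h p)
    (x : L) (p : P) : h (x • p) = x • h p := by
  classical
  set U : AddMonoid.End (P × Q) := AddMonoidHom.mk' (fun z => (z.1, z.2 + h z.1))
    (by intro z w; simp only [Prod.fst_add, Prod.snd_add, map_add, Prod.mk_add_mk,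
          Prod.mk.injEq, true_and]; abel) with hU
  set V : AddMonoid.End (P × Q) := AddMonoidHom.mk' (fun z => (z.1, z.2 - h z.1))
    (by intro z w; simp only [Prod.fst_add, Prod.snd_add, map_add, Prod.mk_add_mk,
          Prod.mk.injEq, true_and]; abel) with hV
  have hUapp : ∀ z : P × Q, U z = (z.1, z.2 + h z.1) := fun z => rfl
  have hVapp : ∀ z : P × Q, V z = (z.1, z.2 - h z.1) := fun z => rfl
  have hUV : U * V = 1 := by
    refine AddMonoidHom.ext fun z => ?_
    show U (V z) = z
    rw [hVapp, hUapp]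
    simp
  have hVU : V * U = 1 := by
    refine AddMonoidHom.ext fun z => ?_
    show V (U z) = z
    rw [hUapp, hVapp]
    simp
  set ρ₁ : L →+* AddMonoid.End (P × Q) := Module.toAddMonoidEnd L (P × Q) with hρ₁
  have key : ∀ a b : AddMonoid.End (P × Q), (a * V) * (U * b) = a * b := fun a b => by
    rw [mul_assoc, ← mul_assoc V U b, hVU, one_mul]
  set ρ₂ : L →+* AddMonoid.End (P × Q) :=
    { toFun := fun y => U * ρ₁ y * V
      map_one' := by show U * ρ₁ 1 * V = 1; rw [map_one, mul_one, hUV]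
      map_mul' := fun y z => by
        show U * ρ₁ (y * z) * V = (U * ρ₁ y * V) * (U * ρ₁ z * V)
        have hre : (U * ρ₁ y * V) * (U * ρ₁ z * V)
            = U * ρ₁ y * (V * U) * (ρ₁ z * V) := by simp only [mul_assoc]
        rw [map_mul, hre, hVU, mul_one]
        simp only [mul_assoc]
      map_zero' := by show U * ρ₁ 0 * V = 0; rw [map_zero, mul_zero, zero_mul]
      map_add' := fun y z => by
        show U * ρ₁ (y + z) * V = U * ρ₁ y * V + U * ρ₁ z * V
        rw [map_add, mul_add, add_mul] } with hρ₂
  have hcomp : ρ₂.comp f = ρ₁.comp f := by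
    apply RingHom.ext; intro a
    apply AddMonoidHom.ext; intro z
    show U (ρ₁ (f a) (V z)) = ρ₁ (f a) z
    rw [hVapp]
    show U (f a • ((z.1, z.2 - h z.1) : P × Q)) = f a • z
    rw [Prod.smul_mk, hUapp]
    simp only [smul_sub, hA]
    ext
    · rfl
    · show f a • z.2 - f a • h z.1 + f a • h z.1 = (f a • z).2
      rw [sub_add_cancel]; rfl
  have hρeq : ρ₂ = ρ₁ := hepi _ ρ₂ ρ₁ hcomp
  have hx := DFunLike.congr_fun (DFunLike.congr_fun hρeq x) ((p, 0) : P × Q)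
  have hx' : U (x • ((p, 0 - h p) : P × Q)) = x • ((p, 0) : P × Q) := hx
  rw [Prod.smul_mk, hUapp, Prod.smul_mk] at hx'
  have h2 := congrArg Prod.snd hx'
  simp only [zero_sub, smul_neg, smul_zero] at h2
  -- h2 : -(x • h p) + h (x • p) = 0
  rw [neg_add_eq_zero] at h2
  exact h2.symm

/-- Every strictly `S`-local module admits a unique ring morphism `L → End(N)`
compatible with the `A`-action. -/
lemma endHom_of_local {A : Type} [Ring A] {S : Set A} {L : Type} [Ring L] (f : A →+* L)
    (huniv : ∀ (C : Type) [Ring C] (g : A →+* C), (∀ s ∈ S, IsUnit (g s)) →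
        ∃! h : L →+* C, h.comp f = g)
    (N : Type) [AddCommGroup N] [Module A N]
    (hloc : ∀ s ∈ S, Function.Bijective (fun n : N => s • n)) :
    ∃! h : L →+* AddMonoid.End N, h.comp f = Module.toAddMonoidEnd A N := by
  apply huniv
  intro s hs
  have hbij : Function.Bijective (Module.toAddMonoidEnd A N s) := hloc s hs
  set e := AddEquiv.ofBijective (Module.toAddMonoidEnd A N s : N →+ N) hbij with he
  exact ⟨⟨Module.toAddMonoidEnd A N s, (e.symm : N →+ N),
    AddMonoidHom.ext fun n => e.apply_symm_apply n,
    AddMonoidHom.ext fun n => e.symm_apply_apply n⟩, rfl⟩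

theorem statement13 (A : Type) [Ring A] (S : Set A)
    -- f : A → L is the universal S-inverting ring homomorphism:
    (L : Type) [Ring L] (f : A →+* L)
    (hinv : ∀ s ∈ S, IsUnit (f s))
    (huniv : ∀ (C : Type) [Ring C] (g : A →+* C), (∀ s ∈ S, IsUnit (g s)) →
        ∃! h : L →+* C, h.comp f = g)
    -- L is a left A-module via f:
    [Module A L] (hAL : ∀ (a : A) (x : L), a • x = f a * x)
    -- f is a homological epimorphism: the multiplication map L ⊗_A L → L is an
    -- isomorphism ...
    (hmult : ∃ μ : TProd A L f L →+ L,
        (∀ x y : L, μ (tmk A L f L x y) = x * y) ∧ Function.Bijective μ)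
    -- ... and Tor_i^A(L,L) = 0 for i ≥ 1 (via projective presentations):
    (htor : ∀ (K P : Type) [AddCommGroup K] [Module A K] [AddCommGroup P] [Module A P],
        Module.Projective A P →
        ∀ (ι : K →ₗ[A] P) (π : P →ₗ[A] L),
          Function.Injective ι → Function.Surjective π →
          LinearMap.range ι = LinearMap.ker π →
          ∀ j : TProd A L f K →+ TProd A L f P,
            (∀ (x : L) (n : K), j (tmk A L f K x n) = tmk A L f P x (ι n)) →
            Function.Injective j) :
    -- (a) every L-module, restricted along f, is strictly S-local:
    (∀ (N : Type) [AddCommGroup N] [Module L N],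
        ∀ s ∈ S, Function.Bijective (fun n : N => f s • n)) ∧
    -- (b) every strictly S-local A-module carries a unique compatible L-module
    -- structure:
    (∀ (N : Type) [AddCommGroup N] [Module A N],
        (∀ s ∈ S, Function.Bijective (fun n : N => s • n)) →
        ∃! smul : L → N → N,
          (∀ n, smul 1 n = n) ∧
          (∀ x y n, smul (x * y) n = smul x (smul y n)) ∧
          (∀ x n n', smul x (n + n') = smul x n + smul x n') ∧
          (∀ x y n, smul (x + y) n = smul x n + smul y n) ∧
          (∀ (a : A) (n : N), smul (f a) n = a • n)) ∧
    -- (c) extension of scalars is left adjoint to the inclusion: for every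
    -- A-module M with base change (M', η) along f, and every strictly S-local N,
    -- composition with η gives a bijection Hom_A(L ⊗_A M, N) ≅ Hom_A(M, N):
    (∀ (M : Type) [AddCommGroup M] [Module A M]
        (M' : Type) [AddCommGroup M'] [Module L M']
        (η : M →+ M'), (∀ (a : A) (m : M), η (a • m) = f a • η m) →
        (∀ (N₀ : Type) [AddCommGroup N₀] [Module L N₀] (g : M →+ N₀),
            (∀ (a : A) (m : M), g (a • m) = f a • g m) →
            ∃! h : M' →+ N₀,
              (∀ (x : L) (m' : M'), h (x • m') = x • h m') ∧ h.comp η = g) →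
        ∀ (N : Type) [AddCommGroup N] [Module A N],
          (∀ s ∈ S, Function.Bijective (fun n : N => s • n)) →
          ∀ g : M →+ N, (∀ (a : A) (m : M), g (a • m) = a • g m) →
            ∃! h : M' →+ N,
              (∀ (a : A) (m' : M'), h (f a • m') = a • h m') ∧ h.comp η = g) := by
  
  have hepi := epi_of_univ f hinv huniv
  refine ⟨?_, ?_, ?_⟩
  · -- (a) every L-module is strictly S-local
    intro N _ _ s hs
    obtain ⟨u, hu⟩ := hinv s hs
    constructor
    · intro n₁ n₂ hn
      have h2 := congrArg (fun n : N => (↑u⁻¹ : L) • n) hn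
      simpa only [smul_smul, ← hu, Units.inv_mul, one_smul] using h2
    · intro n
      refine ⟨(↑u⁻¹ : L) • n, ?_⟩
      show f s • ((↑u⁻¹ : L) • n) = n
      rw [← hu, smul_smul, Units.mul_inv, one_smul]
  · -- (b) unique compatible L-module structure
    intro N _ _ hloc
    obtain ⟨h, hcomp, huniq⟩ := endHom_of_local f huniv N hloc
    refine ⟨fun x n => h x n, ⟨?_, ?_, ?_, ?_, ?_⟩, ?_⟩
    · intro n; show h 1 n = n; rw [map_one]; rfl
    · intro x y n; show h (x * y) n = h x (h y n); rw [map_mul]; rfl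
    · intro x n n'; exact (h x).map_add n n'
    · intro x y n; show h (x + y) n = h x n + h y n; rw [map_add]; rfl
    · intro a n
      exact DFunLike.congr_fun (DFunLike.congr_fun hcomp a) n
    · rintro smul' ⟨p1, p2, p3, p4, p5⟩
      have hz : ∀ n : N, smul' 0 n = 0 := by
        intro n
        have h5 := p5 0 n
        rw [map_zero] at h5
        rw [h5, zero_smul]
      set h' : L →+* AddMonoid.End N :=
        { toFun := fun x => AddMonoidHom.mk' (smul' x) (p3 x)
          map_one' := AddMonoidHom.ext fun n => p1 n
          map_mul' := fun x y => AddMonoidHom.ext fun n => p2 x y n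
          map_zero' := AddMonoidHom.ext fun n => hz n
          map_add' := fun x y => AddMonoidHom.ext fun n => p4 x y n } with hh'
      have heq : h' = h := huniq h' (by
        refine RingHom.ext fun a => AddMonoidHom.ext fun n => ?_
        show smul' (f a) n = a • n
        exact p5 a n)
      funext x n
      show smul' x n = h x n
      rw [← heq]; rfl
  · -- (c) extension of scalars is left adjoint
    intro M _ _ M' _ _ η hη hM' N _ _ hloc g hg
    obtain ⟨h, hcomp, -⟩ := endHom_of_local f huniv N hloc
    letI : SMul L N := ⟨fun x n => h x n⟩
    letI : Module L N :=
      { one_smul := fun n => by show h 1 n = n; rw [map_one]; rfl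
        mul_smul := fun x y n => by
          show h (x * y) n = h x (h y n); rw [map_mul]; rfl
        smul_zero := fun x => by show h x (0 : N) = 0; exact (h x).map_zero
        smul_add := fun x n n' => by
          show h x (n + n') = h x n + h x n'; exact (h x).map_add n n'
        add_smul := fun x y n => by
          show h (x + y) n = h x n + h y n; rw [map_add]; rfl
        zero_smul := fun n => by show h 0 n = 0; rw [map_zero]; rfl }
    have hfa : ∀ (a : A) (n : N), f a • n = a • n := fun a n =>
      DFunLike.congr_fun (DFunLike.congr_fun hcomp a) n
    obtain ⟨h₀, ⟨h₀L, h₀η⟩, h₀uniq⟩ := hM' N g (fun a m => by rw [hg, hfa])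
    refine ⟨h₀, ⟨fun a m' => by rw [h₀L (f a) m', hfa], h₀η⟩, ?_⟩
    rintro h' ⟨h'A, h'η⟩
    refine h₀uniq h' ⟨?_, h'η⟩
    intro x m'
    exact Llinear_of_Alinear f hepi M' N h' (fun a p => by rw [h'A, hfa]) x m'
end

section
/- Let k be a field and A = k⟨s,t,y⟩/(st−1). Then the universal localisation A[s⁻¹] ≅ k⟨s, s⁻¹, y⟩ is not flat as a left A-module: the map of right A-modules given by left multiplication by x = (1−ts)y on A is injective, but after applying (−) ⊗_A A[s⁻¹] it becomes the zero map on a nonzero module, hence not injective. -/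
/-!
`A` acts faithfully on the `k`-span of words in the letters `s, t, y`: `t` and `y` prepend
themselves, while `s` deletes a leading `t` and otherwise prepends itself, so that `st` acts as
the identity. Evaluating words back in `A` shows that `a ↦ a • []` is injective. On this module
`x = (1 - ts)y` is injective, because the coefficient of `x • m` at the word `y w` is that of `m`
at `w` (the `ts`-term only produces words starting with `t`); hence `x` is a left
non-zero-divisor of `A`. In `A[s⁻¹]` we have `ts = 1`, so `x ↦ 0`, and `A[s⁻¹] ≠ 0` because `A`
maps to `k` with `s ↦ 1`. Applied to the relation `x · 1 = 0`, the equational criterion would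
write `1 = ∑ f(cⱼ) yⱼ` with `x cⱼ = 0`, i.e. `cⱼ = 0`, forcing `1 = 0`.
-/

/-- The relation `st = 1` on the free algebra on three generators `s,t,y`. -/
def styRel (k : Type) [Field k] :
    FreeAlgebra k (Fin 3) → FreeAlgebra k (Fin 3) → Prop :=
  fun a b => a = FreeAlgebra.ι k 0 * FreeAlgebra.ι k 1 ∧ b = 1

/-- `A = k⟨s,t,y⟩/(st−1)`. -/
abbrev AA (k : Type) [Field k] : Type := RingQuot (styRel k)

/-- The generator `s`. -/
noncomputable def sA (k : Type) [Field k] : AA k :=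
  RingQuot.mkAlgHom k (styRel k) (FreeAlgebra.ι k 0)

/-- The generator `t`. -/
noncomputable def tA (k : Type) [Field k] : AA k :=
  RingQuot.mkAlgHom k (styRel k) (FreeAlgebra.ι k 1)

/-- The generator `y`. -/
noncomputable def yA (k : Type) [Field k] : AA k :=
  RingQuot.mkAlgHom k (styRel k) (FreeAlgebra.ι k 2)

theorem mul_left_injective_of_rep {R A M : Type*} [Semiring R] [Ring A] [AddCommGroup M]
    [Module R M] (ρ : A →+* Module.End R M) (θ : M →+ A) (hθ : ∀ a m, θ (ρ a m) = a * θ m)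
    {e : M} (he : θ e = 1) {x : A} (hx : Function.Injective (ρ x)) :
    Function.Injective (x * ·) := by
  intro a b hab
  have hae : ρ a e = ρ b e := hx <| by
    simp only [← Module.End.mul_apply, ← map_mul, hab]
  simpa [hθ, he] using congrArg θ hae

section EquationalCriterion

variable {A L : Type*} [Ring A] [Ring L]

def SatisfiesEquationalCriterion (f : A →+* L) : Prop :=
  ∀ (n : ℕ) (a : Fin n → A) (x : Fin n → L), (∑ i, f (a i) * x i) = 0 →
    ∃ (m : ℕ) (y : Fin m → L) (c : Fin n → Fin m → A),
      (∀ i, x i = ∑ j, f (c i j) * y j) ∧ ∀ j, (∑ i, a i * c i j) = 0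

theorem not_satisfiesEquationalCriterion_of_map_eq_zero [Nontrivial L] (f : A →+* L) {x : A}
    (hx : Function.Injective (x * ·)) (hfx : f x = 0) : ¬ SatisfiesEquationalCriterion f := by
  intro hflat
  obtain ⟨m, y, c, hy, hc⟩ := hflat 1 (fun _ => x) (fun _ => 1) (by simp [hfx])
  have hc0 : ∀ j, c 0 j = 0 := fun j =>
    hx <| by simpa using hc j
  simpa [hc0] using hy 0

end EquationalCriterion

namespace AA

variable (k : Type) [Field k]

noncomputable def gen (i : Fin 3) : AA k :=
  RingQuot.mkAlgHom k (styRel k) (FreeAlgebra.ι k i)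

theorem sA_mul_tA : sA k * tA k = 1 := by
  rw [sA, tA, ← map_mul, RingQuot.mkAlgHom_rel k (show styRel k _ 1 from ⟨rfl, rfl⟩), map_one]

-- The letters `0, 1, 2` of a word are `s, t, y`.
def wordAct (i : Fin 3) (w : List (Fin 3)) : List (Fin 3) :=
  if i = 0 ∧ w.head? = some 1 then w.tail else i :: w

theorem wordAct_of_ne_zero {i : Fin 3} (hi : i ≠ 0) : wordAct i = List.cons i := by
  funext w
  simp [wordAct, hi]

theorem wordAct_zero_comp_wordAct_one : wordAct 0 ∘ wordAct 1 = id := by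
  funext w
  simp [wordAct]

noncomputable def wordProd (w : List (Fin 3)) : AA k :=
  (w.map (gen k)).prod

theorem wordProd_wordAct (i : Fin 3) (w : List (Fin 3)) :
    wordProd k (wordAct i w) = gen k i * wordProd k w := by
  unfold wordAct
  split_ifs with h
  · obtain ⟨rfl, hw⟩ := h
    obtain ⟨_, w, rfl⟩ := List.head?_eq_some_iff.mp hw
    simp only [wordProd, List.map_cons, List.prod_cons, List.tail_cons]
    rw [← mul_assoc, show gen k 0 * gen k 1 = 1 from sA_mul_tA k, one_mul]
  · simp [wordProd]

noncomputable def rep : AA k →ₐ[k] Module.End k (List (Fin 3) →₀ k) :=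
  RingQuot.liftAlgHom k ⟨FreeAlgebra.lift k fun i => Finsupp.lmapDomain k k (wordAct i), by
    rintro _ _ ⟨rfl, rfl⟩
    rw [map_mul, FreeAlgebra.lift_ι_apply, FreeAlgebra.lift_ι_apply, map_one,
      Module.End.mul_eq_comp, ← Finsupp.lmapDomain_comp, wordAct_zero_comp_wordAct_one,
      Finsupp.lmapDomain_id, Module.End.one_eq_id]⟩

theorem rep_gen (i : Fin 3) : rep k (gen k i) = Finsupp.lmapDomain k k (wordAct i) := by
  rw [rep, gen, RingQuot.liftAlgHom_mkAlgHom_apply, FreeAlgebra.lift_ι_apply]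

noncomputable def wordEval : (List (Fin 3) →₀ k) →ₗ[k] AA k :=
  Finsupp.linearCombination k (wordProd k)

theorem wordEval_rep_gen (i : Fin 3) (m : List (Fin 3) →₀ k) :
    wordEval k (rep k (gen k i) m) = gen k i * wordEval k m := by
  induction m using Finsupp.induction_linear with
  | zero => simp
  | add m m' hm hm' => rw [map_add, map_add, hm, hm', map_add, mul_add]
  | single w c =>
    rw [rep_gen, Finsupp.lmapDomain_apply, Finsupp.mapDomain_single, wordEval,
      Finsupp.linearCombination_single, Finsupp.linearCombination_single, wordProd_wordAct,
      mul_smul_comm]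

theorem wordEval_rep (a : AA k) (m : List (Fin 3) →₀ k) :
    wordEval k (rep k a m) = a * wordEval k m := by
  obtain ⟨a, rfl⟩ := RingQuot.mkAlgHom_surjective k (styRel k) a
  induction a generalizing m with
  | grade0 c =>
    rw [AlgHom.commutes, AlgHom.commutes, Module.algebraMap_end_apply, map_smul,
      Algebra.smul_def]
  | grade1 i => exact wordEval_rep_gen k i m
  | mul a b ha hb => rw [map_mul, map_mul, Module.End.mul_apply, ha, hb, mul_assoc]
  | add a b ha hb => rw [map_add, map_add, LinearMap.add_apply, map_add, ha, hb, add_mul]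

theorem wordEval_single_nil : wordEval k (Finsupp.single [] 1) = 1 := by
  simp [wordEval, wordProd]

theorem rep_x_apply_cons_two (m : List (Fin 3) →₀ k) (w : List (Fin 3)) :
    rep k ((1 - tA k * sA k) * yA k) m (2 :: w) = m w := by
  have hy : rep k (yA k) m (2 :: w) = m w := by
    rw [yA, ← gen, rep_gen, Finsupp.lmapDomain_apply, wordAct_of_ne_zero (by decide),
      Finsupp.mapDomain_apply List.cons_injective]
  have ht (n : List (Fin 3) →₀ k) : rep k (tA k) n (2 :: w) = 0 := by
    rw [tA, ← gen, rep_gen, Finsupp.lmapDomain_apply, wordAct_of_ne_zero (by decide),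
      Finsupp.mapDomain_of_notMem_range]
    simp
  simp [hy, ht]

theorem rep_x_injective : Function.Injective (rep k ((1 - tA k * sA k) * yA k)) := by
  intro m m' h
  ext w
  rw [← rep_x_apply_cons_two k m w, ← rep_x_apply_cons_two k m' w, h]

theorem x_mul_injective : Function.Injective ((1 - tA k * sA k) * yA k * ·) :=
  mul_left_injective_of_rep (rep k).toRingHom (wordEval k).toAddMonoidHom (wordEval_rep k)
    (wordEval_single_nil k) (rep_x_injective k)

noncomputable def evalOnes : AA k →ₐ[k] k :=
  RingQuot.liftAlgHom k ⟨FreeAlgebra.lift k fun _ => 1, by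
    rintro _ _ ⟨rfl, rfl⟩
    simp⟩

theorem evalOnes_sA : evalOnes k (sA k) = 1 := by
  rw [sA, evalOnes, RingQuot.liftAlgHom_mkAlgHom_apply, FreeAlgebra.lift_ι_apply]

end AA

open AA in
theorem statement18 (k : Type) [Field k]
    -- f : A → L is the universal s-inverting k-algebra homomorphism
    -- (L ≅ k⟨s,s⁻¹,y⟩):
    (L : Type) [Ring L] [Algebra k L] (f : AA k →ₐ[k] L)
    (hinv : IsUnit (f (sA k)))
    (huniv : ∀ (C : Type) [Ring C] [Algebra k C] (g : AA k →ₐ[k] C),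
        IsUnit (g (sA k)) → ∃! h : L →ₐ[k] C, h.comp f = g) :
    -- left multiplication by x = (1−ts)y is injective on A as a right A-module:
    Function.Injective (fun a : AA k => (1 - tA k * sA k) * yA k * a) ∧
    -- but its image in L = A[s⁻¹] is zero, while L is a nonzero ring:
    f ((1 - tA k * sA k) * yA k) = 0 ∧
    (0 : L) ≠ 1 ∧
    -- hence L is not flat as a left A-module (equational criterion fails):
    ¬ (∀ (n : ℕ) (a : Fin n → AA k) (x : Fin n → L),
        (∑ i, f (a i) * x i) = 0 →
          ∃ (m : ℕ) (y : Fin m → L) (c : Fin n → Fin m → AA k),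
            (∀ i, x i = ∑ j, f (c i j) * y j) ∧ ∀ j, (∑ i, a i * c i j) = 0) := by
  have hts : f (tA k) * f (sA k) = 1 := by
    obtain ⟨u, hu⟩ := hinv
    have hst : (u : L) * f (tA k) = 1 := by rw [hu, ← map_mul, sA_mul_tA, map_one]
    rw [← hu, ← Units.inv_eq_of_mul_eq_one_right hst, Units.inv_mul]
  have hfx : f ((1 - tA k * sA k) * yA k) = 0 := by
    rw [map_mul, map_sub, map_one, map_mul, hts, sub_self, zero_mul]
  have : Nontrivial L := by
    obtain ⟨h, -⟩ := huniv k (evalOnes k) (by rw [evalOnes_sA]; exact isUnit_one)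
    exact h.toRingHom.domain_nontrivial
  exact ⟨x_mul_injective k, hfx, zero_ne_one,
    not_satisfiesEquationalCriterion_of_map_eq_zero f.toRingHom (x_mul_injective k) hfx⟩
end
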